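/- arXiv:1410.2784 — 5 statements merged into one kernel-verified Lean document; each statement's English description precedes it below -/
import Mathlib

section
/- The function Φ₁ is differentiable on the open interval (0,π), and for every θ¹ ∈ (0,π) its derivative satisfies Φ₁′(θ¹) = ( sin θ¹ / (2π sin(Φ₁(θ¹))) ) · ∫₀^{2π} λ(θ¹,τ) dτ, and this derivative is strictly positive on (0,π). -/
open Real Set MeasureTheory intervalIntegral

/-!
Write `Φ₁ = arccos (1 - F / (2π))`, where `F` is the primitive from `0` of the function
`σ ↦ sin σ · ∫₀^{2π} λ(σ,τ) dτ`, which is continuous on `[0,π]` and positive on `(0,π)`.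
By the fundamental theorem of calculus `F' = sin θ · ∫₀^{2π} λ(θ,τ) dτ` on `(0,π)`, and the
normalization `F(π) = 4π` gives `0 < F(θ) < 4π` there, so the argument of `arccos` stays in
`(-1,1)`, where `arccos' u = -1 / sin (arccos u)`; the chain rule gives the formula.
-/

theorem continuousOn_parametric_intervalIntegral_of_continuousOn
    {X E : Type*} [TopologicalSpace X] [NormedAddCommGroup E] [NormedSpace ℝ E]
    {μ : Measure ℝ} [IsLocallyFiniteMeasure μ] [NullSingletonClass μ] {f : X → ℝ → E}
    {s : Set X} {a b : ℝ} (hf : ContinuousOn (Function.uncurry f) (s ×ˢ uIcc a b)) :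
    ContinuousOn (fun x => ∫ t in a..b, f x t ∂μ) s := by
  -- Clamping the second variable to `uIcc a b` changes no integral but makes `f` continuous.
  set clamp := projIcc (min a b) (max a b) min_le_max
  have hclamp : Continuous (Function.uncurry fun (x : s) t => f x (clamp t)) :=
    hf.comp_continuous (f := fun p : s × ℝ => ((p.1 : X), (clamp p.2 : ℝ))) (by fun_prop)
      fun p => ⟨p.1.2, (clamp p.2).2⟩
  rw [continuousOn_iff_continuous_domRestrict]
  refine (continuous_parametric_intervalIntegral_of_continuous' (μ := μ) hclamp a b).congr
    fun x => integral_congr fun t ht => ?_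
  simp [clamp, projIcc_of_mem _ ht]

theorem ContinuousOn.hasDerivAt_integral_of_mem_Ioo
    {E : Type*} [NormedAddCommGroup E] [NormedSpace ℝ E] [CompleteSpace E]
    {f : ℝ → E} {a b x : ℝ} (hf : ContinuousOn f (Icc a b)) (hx : x ∈ Ioo a b) :
    HasDerivAt (fun y => ∫ t in a..y, f t) (f x) x :=
  integral_hasDerivAt_right
    ((hf.mono (Icc_subset_Icc_right hx.2.le)).intervalIntegrable_of_Icc hx.1.le)
    ((hf.mono Ioo_subset_Icc_self).stronglyMeasurableAtFilter isOpen_Ioo x hx)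
    (hf.continuousAt (Icc_mem_nhds hx.1 hx.2))

theorem integral_mem_Ioo_of_pos_on_Ioo {f : ℝ → ℝ} {a b x : ℝ}
    (hf : ContinuousOn f (Icc a b)) (hpos : ∀ t ∈ Ioo a b, 0 < f t) (hx : x ∈ Ioo a b) :
    ∫ t in a..x, f t ∈ Ioo 0 (∫ t in a..b, f t) := by
  have hhead : 0 < ∫ t in a..x, f t :=
    intervalIntegral_pos_of_pos_on
      ((hf.mono (Icc_subset_Icc_right hx.2.le)).intervalIntegrable_of_Icc hx.1.le)
      (fun t ht => hpos t ⟨ht.1, ht.2.trans hx.2⟩) hx.1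
  have htail : 0 < ∫ t in x..b, f t :=
    intervalIntegral_pos_of_pos_on
      ((hf.mono (Icc_subset_Icc_left hx.1.le)).intervalIntegrable_of_Icc hx.2.le)
      (fun t ht => hpos t ⟨hx.1.trans ht.1, ht.2⟩) hx.2
  rw [← integral_add_adjacent_intervals (intervalIntegrable_of_integral_ne_zero hhead.ne')
    (intervalIntegrable_of_integral_ne_zero htail.ne')]
  exact ⟨hhead, by linarith⟩

theorem sin_arccos_pos {x : ℝ} (h₁ : -1 < x) (h₂ : x < 1) : 0 < sin (arccos x) :=
  sin_pos_of_pos_of_lt_pi (arccos_pos.2 h₂) (arccos_lt_pi.2 h₁)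

theorem HasDerivAt.arccos {f : ℝ → ℝ} {f' x : ℝ} (hf : HasDerivAt f f' x)
    (h₁ : -1 < f x) (h₂ : f x < 1) :
    HasDerivAt (fun y => Real.arccos (f y)) (-f' / Real.sin (Real.arccos (f x))) x := by
  rw [sin_arccos]
  exact ((hasDerivAt_arccos h₁.ne' h₂.ne).comp x hf).congr_deriv (by ring)

/-- `Φ₁` is differentiable on `(0,π)`, and for every `θ¹ ∈ (0,π)`,
`Φ₁′(θ¹) = (sin θ¹ / (2π sin(Φ₁(θ¹)))) · ∫₀^{2π} λ(θ¹,τ) dτ`,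
and this derivative is strictly positive on `(0,π)`. -/
theorem stmt_1
    (lam : ℝ → ℝ → ℝ)
    (hcont : ContinuousOn (fun p : ℝ × ℝ => lam p.1 p.2)
      (Set.Icc (0:ℝ) π ×ˢ Set.Icc (0:ℝ) (2*π)))
    (hpos : ∀ p ∈ Set.Icc (0:ℝ) π ×ˢ Set.Icc (0:ℝ) (2*π), 0 < lam p.1 p.2)
    (hnorm : (∫ σ in (0:ℝ)..π, ∫ τ in (0:ℝ)..(2*π), lam σ τ * Real.sin σ) = 4*π)
    (Φ₁ : ℝ → ℝ)
    (hΦ₁ : ∀ θ, Φ₁ θ = Real.arccos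
      (1 - (1/(2*π)) * ∫ σ in (0:ℝ)..θ, ∫ τ in (0:ℝ)..(2*π), lam σ τ * Real.sin σ)) :
    ∀ θ ∈ Set.Ioo (0:ℝ) π,
      HasDerivAt Φ₁
        (Real.sin θ / (2*π*Real.sin (Φ₁ θ)) * ∫ τ in (0:ℝ)..(2*π), lam θ τ) θ ∧
      0 < Real.sin θ / (2*π*Real.sin (Φ₁ θ)) * ∫ τ in (0:ℝ)..(2*π), lam θ τ := by
  intro θ hθ
  have two_pi_pos : 0 < 2 * π := by positivity
  simp only [intervalIntegral.integral_mul_const] at hΦ₁ hnorm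
  set g : ℝ → ℝ := fun σ => ∫ τ in (0:ℝ)..(2*π), lam σ τ
  have hgpos : ∀ σ ∈ Icc 0 π, 0 < g σ := fun σ hσ =>
    intervalIntegral_pos_of_pos_on
      ((hcont.comp (f := fun τ => (σ, τ)) (by fun_prop) fun τ hτ => ⟨hσ, hτ⟩)
        |>.intervalIntegrable_of_Icc two_pi_pos.le)
      (fun τ hτ => hpos (σ, τ) ⟨hσ, Ioo_subset_Icc_self hτ⟩) two_pi_pos
  have hG : ContinuousOn (fun σ => g σ * sin σ) (Icc 0 π) :=
    (continuousOn_parametric_intervalIntegral_of_continuousOn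
      (by rwa [uIcc_of_le two_pi_pos.le])).mul continuous_sin.continuousOn
  have hGpos : ∀ σ ∈ Ioo 0 π, 0 < g σ * sin σ := fun σ hσ =>
    mul_pos (hgpos σ (Ioo_subset_Icc_self hσ)) (sin_pos_of_pos_of_lt_pi hσ.1 hσ.2)
  obtain ⟨hF₀, hFπ⟩ := hnorm ▸ integral_mem_Ioo_of_pos_on_Ioo hG hGpos hθ
  have hu₁ : -1 < 1 - 1 / (2 * π) * ∫ σ in (0:ℝ)..θ, g σ * sin σ := by
    rw [div_mul_eq_mul_div, one_mul, lt_sub_comm, div_lt_iff₀ two_pi_pos]; linarith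
  have hu₂ : 1 - 1 / (2 * π) * ∫ σ in (0:ℝ)..θ, g σ * sin σ < 1 := by
    have := mul_pos (one_div_pos.2 two_pi_pos) hF₀; linarith
  have hderiv := HasDerivAt.arccos
    (((hG.hasDerivAt_integral_of_mem_Ioo hθ).const_mul (1 / (2 * π))).const_sub 1) hu₁ hu₂
  rw [← funext hΦ₁, ← hΦ₁] at hderiv
  have hsin := hΦ₁ θ ▸ sin_arccos_pos hu₁ hu₂
  refine ⟨hderiv.congr_deriv ?_, ?_⟩
  · field_simp
    exact mul_comm ..
  · exact mul_pos (div_pos (sin_pos_of_pos_of_lt_pi hθ.1 hθ.2) (by positivity))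
      (hgpos θ (Ioo_subset_Icc_self hθ))
end

section
/- The map Φ(θ¹,θ²) := (Φ₁(θ¹), Φ₂(θ¹,θ²)) is differentiable at every point of the open rectangle Ω = (0,π) × (0,2π), and its Jacobian determinant there equals det DΦ(θ¹,θ²) = λ(θ¹,θ²) sin θ¹ / sin(Φ₁(θ¹)), which is strictly positive on Ω. -/
open Real Set MeasureTheory intervalIntegral Topology Filter

lemma det_aux {L : (ℝ×ℝ) →ₗ[ℝ] (ℝ×ℝ)} {a c : ℝ} (h1 : (L (1,0)).1 = a)
    (h10 : (L (0,1)).1 = 0) (h2 : (L (0,1)).2 = c) :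
    LinearMap.det L = a * c := by
  rw [← LinearMap.det_toMatrix (Module.Basis.finTwoProd ℝ), Matrix.det_fin_two]
  simp [LinearMap.toMatrix_apply, h1, h10, h2]

set_option maxHeartbeats 1600000 in
/-- The map `Φ(θ¹,θ²) := (Φ₁(θ¹), Φ₂(θ¹,θ²))` is differentiable at every
point of the open rectangle `Ω = (0,π) × (0,2π)`, and its Jacobian determinant there
equals `det DΦ(θ¹,θ²) = λ(θ¹,θ²) sin θ¹ / sin(Φ₁(θ¹))`, which is strictly positive on `Ω`. -/
theorem stmt_4
    (lam : ℝ → ℝ → ℝ)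
    (hsmooth : ContDiffOn ℝ (⊤ : ℕ∞) (fun p : ℝ × ℝ => lam p.1 p.2)
      (Set.Icc (0:ℝ) π ×ˢ Set.Icc (0:ℝ) (2*π)))
    (hpos : ∀ p ∈ Set.Icc (0:ℝ) π ×ˢ Set.Icc (0:ℝ) (2*π), 0 < lam p.1 p.2)
    (hnorm : (∫ σ in (0:ℝ)..π, ∫ τ in (0:ℝ)..(2*π), lam σ τ * Real.sin σ) = 4*π)
    (Φ₁ : ℝ → ℝ)
    (hΦ₁ : ∀ θ, Φ₁ θ = Real.arccos
      (1 - (1/(2*π)) * ∫ σ in (0:ℝ)..θ, ∫ τ in (0:ℝ)..(2*π), lam σ τ * Real.sin σ))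
    (Φ₂ : ℝ → ℝ → ℝ)
    (hΦ₂ : ∀ θ1 θ2, Φ₂ θ1 θ2 =
      2*π * (∫ τ in (0:ℝ)..θ2, lam θ1 τ) / ∫ τ in (0:ℝ)..(2*π), lam θ1 τ)
    (Φ : ℝ × ℝ → ℝ × ℝ)
    (hΦ : ∀ p : ℝ × ℝ, Φ p = (Φ₁ p.1, Φ₂ p.1 p.2)) :
    ∀ p ∈ Set.Ioo (0:ℝ) π ×ˢ Set.Ioo (0:ℝ) (2*π),
      DifferentiableAt ℝ Φ p ∧
      LinearMap.det ((fderiv ℝ Φ p).toLinearMap)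
        = lam p.1 p.2 * Real.sin p.1 / Real.sin (Φ₁ p.1) ∧
      0 < lam p.1 p.2 * Real.sin p.1 / Real.sin (Φ₁ p.1) := by
  rintro ⟨x, y⟩ ⟨⟨hx0, hxπ⟩, ⟨hy0, hy2π⟩⟩
  dsimp only at hx0 hxπ hy0 hy2π ⊢
  have hπ : (0:ℝ) < π := pi_pos
  have h2π : (0:ℝ) < 2*π := by linarith
  set K : Set (ℝ×ℝ) := Icc (0:ℝ) π ×ˢ Icc (0:ℝ) (2*π) with hKdef
  set lamp : ℝ×ℝ → ℝ := fun q => lam q.1 q.2 with hlampdef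
  have hcont : ContinuousOn lamp K := hsmooth.continuousOn
  have hKx : Icc (0:ℝ) π ∈ 𝓝 x := Icc_mem_nhds hx0 hxπ
  have hKy : Icc (0:ℝ) (2*π) ∈ 𝓝 y := Icc_mem_nhds hy0 hy2π
  have hKnhds : K ∈ 𝓝 ((x,y) : ℝ×ℝ) := prod_mem_nhds hKx hKy
  have hxmem : x ∈ Icc (0:ℝ) π := ⟨hx0.le, hxπ.le⟩
  have hymem : y ∈ Icc (0:ℝ) (2*π) := ⟨hy0.le, hy2π.le⟩
  -- integrability of slices
  have hIntLam : ∀ θ ∈ Icc (0:ℝ) π, ∀ c ∈ Icc (0:ℝ) (2*π), ∀ d ∈ Icc (0:ℝ) (2*π),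
      IntervalIntegrable (fun τ => lam θ τ) volume c d := by
    intro θ hθ c hc d hd
    apply ContinuousOn.intervalIntegrable
    have h1 : ContinuousOn ((fun q : ℝ×ℝ => lam q.1 q.2) ∘ (fun τ : ℝ => (θ, τ)))
        (uIcc c d) :=
      hcont.comp ((continuous_const.prodMk continuous_id).continuousOn)
        (fun τ hτ => ⟨hθ, uIcc_subset_Icc hc hd hτ⟩)
    exact h1
  -- Tietze extension for continuity facts
  have hKclosed : IsClosed K := isClosed_Icc.prod isClosed_Icc
  obtain ⟨lamC, hlamC⟩ := ContinuousMap.exists_restrict_eq (X := ℝ×ℝ) (Y := ℝ) hKclosed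
      ⟨K.restrict lamp, hcont.restrict⟩
  have hCeq : ∀ q ∈ K, lamC q = lamp q := fun q hq => ContinuousMap.congr_fun hlamC ⟨q, hq⟩
  -- the function H and its continuous version
  have hHeq : ∀ θ ∈ Icc (0:ℝ) π,
      (∫ τ in (0:ℝ)..(2*π), lam θ τ) = ∫ τ in (0:ℝ)..(2*π), lamC (θ, τ) := by
    intro θ hθ
    apply intervalIntegral.integral_congr
    intro τ hτ
    rw [uIcc_of_le h2π.le] at hτ
    exact (hCeq (θ, τ) ⟨hθ, hτ⟩).symm
  have hHc_cont : Continuous fun θ : ℝ => ∫ τ in (0:ℝ)..(2*π), lamC (θ, τ) := by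
    apply intervalIntegral.continuous_parametric_intervalIntegral_of_continuous'
    fun_prop
  have hHpos : ∀ θ ∈ Icc (0:ℝ) π, 0 < ∫ τ in (0:ℝ)..(2*π), lam θ τ := by
    intro θ hθ
    apply intervalIntegral.intervalIntegral_pos_of_pos_on
      (hIntLam θ hθ 0 ⟨le_refl 0, h2π.le⟩ (2*π) ⟨h2π.le, le_refl _⟩) _ h2π
    intro τ hτ
    exact hpos (θ, τ) ⟨hθ, ⟨hτ.1.le, hτ.2.le⟩⟩
  -- the function gC and f₁C
  set gC : ℝ → ℝ := fun σ => (∫ τ in (0:ℝ)..(2*π), lamC (σ, τ)) * Real.sin σ with hgCdef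
  have hgC_cont : Continuous gC := hHc_cont.mul Real.continuous_sin
  set f₁C : ℝ → ℝ := fun θ => ∫ σ in (0:ℝ)..θ, gC σ with hf₁Cdef
  have hinner : ∀ θ ∈ Icc (0:ℝ) π,
      (∫ σ in (0:ℝ)..θ, ∫ τ in (0:ℝ)..(2*π), lam σ τ * Real.sin σ) = f₁C θ := by
    intro θ hθ
    apply intervalIntegral.integral_congr
    intro σ hσ
    have hσ' : σ ∈ Icc (0:ℝ) π := by
      rw [uIcc_of_le hθ.1] at hσ; exact ⟨hσ.1, hσ.2.trans hθ.2⟩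
    show (∫ τ in (0:ℝ)..(2*π), lam σ τ * Real.sin σ) = gC σ
    rw [intervalIntegral.integral_mul_const, hHeq σ hσ']
  -- differentiation under the integral sign
  have hUD : UniqueDiffOn ℝ K := (uniqueDiffOn_Icc hπ).prod (uniqueDiffOn_Icc h2π)
  have hdiffOn : DifferentiableOn ℝ lamp K := hsmooth.differentiableOn (by simp)
  have hfd_cont : ContinuousOn (fun q => fderivWithin ℝ lamp K q) K :=
    hsmooth.continuousOn_fderivWithin hUD (by simp)
  set dlam : ℝ → ℝ := fun τ => (fderivWithin ℝ lamp K (x, τ)) (1, 0) with hdlamdef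
  have key : ∀ d ∈ Icc (0:ℝ) (2*π), HasDerivAt (fun θ => ∫ τ in (0:ℝ)..d, lam θ τ)
      (∫ τ in (0:ℝ)..d, dlam τ) x := by
    intro d hd
    have hax : x/2 < x := by linarith
    have ha0 : 0 < x/2 := by linarith
    have hxb : x < (x+π)/2 := by linarith
    have hbπ : (x+π)/2 < π := by linarith
    set S : Set (ℝ×ℝ) := Icc (x/2) ((x+π)/2) ×ˢ Icc (0:ℝ) (2*π) with hSdef
    have hSK : S ⊆ K := prod_mono (Icc_subset_Icc (by linarith) (by linarith)) subset_rfl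
    have hScompact : IsCompact S := isCompact_Icc.prod isCompact_Icc
    obtain ⟨C, hC⟩ := hScompact.exists_bound_of_continuousOn (hfd_cont.mono hSK)
    set ε : ℝ := min (x - x/2) ((x+π)/2 - x) with hεdef
    have hε_pos : 0 < ε := lt_min (by linarith) (by linarith)
    have hball : Metric.ball x ε ⊆ Icc (x/2) ((x+π)/2) := by
      intro θ hθ
      rw [Metric.mem_ball, Real.dist_eq, abs_lt] at hθ
      have e1 := min_le_left (x - x/2) ((x+π)/2 - x)
      have e2 := min_le_right (x - x/2) ((x+π)/2 - x)
      exact ⟨by linarith [hθ.1], by linarith [hθ.2]⟩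
    have hlipS : LipschitzOnWith (Real.nnabs (max C 0)) lamp S := by
      apply Convex.lipschitzOnWith_of_nnnorm_hasFDerivWithin_le
        (f' := fun q => fderivWithin ℝ lamp K q)
        (fun q hq => ((hdiffOn q (hSK hq)).hasFDerivWithinAt).mono hSK)
        (fun q hq => ?_) ((convex_Icc _ _).prod (convex_Icc _ _))
      rw [← NNReal.coe_le_coe, coe_nnnorm, Real.coe_nnabs]
      exact (hC q hq).trans ((le_max_left _ _).trans (le_abs_self _))
    have hsub : Set.uIoc (0:ℝ) d ⊆ Icc (0:ℝ) (2*π) := by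
      rw [uIoc_of_le hd.1]
      exact Ioc_subset_Icc_self.trans (Icc_subset_Icc le_rfl hd.2)
    have hmeas : ∀ᶠ θ in 𝓝 x, AEStronglyMeasurable (fun τ => lam θ τ)
        (volume.restrict (Set.uIoc (0:ℝ) d)) := by
      filter_upwards [hKx] with θ hθ
      apply ContinuousOn.aestronglyMeasurable ?_ measurableSet_uIoc
      have h1 : ContinuousOn ((fun q : ℝ×ℝ => lam q.1 q.2) ∘ (fun τ : ℝ => (θ, τ)))
          (Set.uIoc (0:ℝ) d) :=
        hcont.comp ((continuous_const.prodMk continuous_id).continuousOn)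
          (fun τ hτ => ⟨hθ, hsub hτ⟩)
      exact h1
    have hF'meas : AEStronglyMeasurable dlam (volume.restrict (Set.uIoc (0:ℝ) d)) := by
      apply ContinuousOn.aestronglyMeasurable ?_ measurableSet_uIoc
      have h1 : ContinuousOn ((fun q => fderivWithin ℝ lamp K q) ∘ (fun τ : ℝ => (x, τ)))
          (Set.uIoc (0:ℝ) d) :=
        hfd_cont.comp ((continuous_const.prodMk continuous_id).continuousOn)
          (fun τ hτ => ⟨hxmem, hsub hτ⟩)
      exact h1.clm_apply continuousOn_const
    have h_lip : ∀ᵐ τ ∂(volume : Measure ℝ), τ ∈ Set.uIoc (0:ℝ) d →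
        LipschitzOnWith (Real.nnabs (max C 0)) (fun θ => lam θ τ) (Metric.ball x ε) := by
      apply Filter.Eventually.of_forall
      intro τ hτ θ1 h1 θ2 h2
      have e1 : ((θ1, τ) : ℝ×ℝ) ∈ S := ⟨hball h1, hsub hτ⟩
      have e2 : ((θ2, τ) : ℝ×ℝ) ∈ S := ⟨hball h2, hsub hτ⟩
      calc edist (lam θ1 τ) (lam θ2 τ) = edist (lamp (θ1,τ)) (lamp (θ2,τ)) := rfl
        _ ≤ (Real.nnabs (max C 0)) * edist ((θ1,τ) : ℝ×ℝ) ((θ2,τ):ℝ×ℝ) := hlipS e1 e2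
        _ = (Real.nnabs (max C 0)) * edist θ1 θ2 := by
            congr 1
            rw [Prod.edist_eq, edist_self]
            exact max_eq_left zero_le
    have h_diff : ∀ᵐ τ ∂(volume : Measure ℝ), τ ∈ Set.uIoc (0:ℝ) d →
        HasDerivAt (fun θ => lam θ τ) (dlam τ) x := by
      apply Filter.Eventually.of_forall
      intro τ hτ
      have hKmem : ((x,τ):ℝ×ℝ) ∈ K := ⟨hxmem, hsub hτ⟩
      have hw : HasFDerivWithinAt lamp (fderivWithin ℝ lamp K (x,τ)) K (x,τ) :=
        (hdiffOn _ hKmem).hasFDerivWithinAt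
      have hι : HasDerivWithinAt (fun θ : ℝ => ((θ, τ) : ℝ×ℝ)) ((1:ℝ),(0:ℝ))
          (Icc (0:ℝ) π) x :=
        ((hasDerivAt_id x).prodMk (hasDerivAt_const x τ)).hasDerivWithinAt
      have hcomp := hw.comp_hasDerivWithinAt x hι
        (show MapsTo (fun θ : ℝ => ((θ, τ) : ℝ×ℝ)) (Icc (0:ℝ) π) K from fun θ hθ => ⟨hθ, hsub hτ⟩)
      exact hcomp.hasDerivAt hKx
    have hint : IntervalIntegrable (fun τ => lam x τ) volume 0 d :=
      hIntLam x hxmem 0 ⟨le_rfl, h2π.le⟩ d hd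
    exact (intervalIntegral.hasDerivAt_integral_of_dominated_loc_of_lip (Metric.ball_mem_nhds x hε_pos) hmeas hint
      hF'meas h_lip intervalIntegrable_const h_diff).2
  -- derivative of f₁C
  have hf₁C_deriv : HasDerivAt f₁C (gC x) x :=
    intervalIntegral.integral_hasDerivAt_right (hgC_cont.intervalIntegrable _ _)
      hgC_cont.stronglyMeasurable.stronglyMeasurableAtFilter hgC_cont.continuousAt
  -- range facts for arccos
  have hgC_pos : ∀ σ ∈ Ioo (0:ℝ) π, 0 < gC σ := by
    intro σ hσ
    have hσ' : σ ∈ Icc (0:ℝ) π := ⟨hσ.1.le, hσ.2.le⟩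
    have h1 := hHpos σ hσ'
    rw [hHeq σ hσ'] at h1
    exact mul_pos h1 (Real.sin_pos_of_pos_of_lt_pi hσ.1 hσ.2)
  have hf₁pos : 0 < f₁C x := by
    apply intervalIntegral.intervalIntegral_pos_of_pos_on
      (hgC_cont.intervalIntegrable _ _) _ hx0
    intro σ hσ
    exact hgC_pos σ ⟨hσ.1, hσ.2.trans hxπ⟩
  have hf₁π : f₁C π = 4*π := by rw [← hinner π ⟨hπ.le, le_rfl⟩]; exact hnorm
  have hsplit : f₁C x + (∫ σ in x..π, gC σ) = f₁C π :=
    intervalIntegral.integral_add_adjacent_intervals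
      (hgC_cont.intervalIntegrable _ _) (hgC_cont.intervalIntegrable _ _)
  have htail : 0 < ∫ σ in x..π, gC σ := by
    apply intervalIntegral.intervalIntegral_pos_of_pos_on
      (hgC_cont.intervalIntegrable _ _) _ hxπ
    intro σ hσ
    exact hgC_pos σ ⟨hx0.trans hσ.1, hσ.2⟩
  have hf₁lt : f₁C x < 4*π := by linarith
  obtain ⟨u₀, hu₀⟩ : ∃ u₀ : ℝ, u₀ = 1 - 1/(2*π) * f₁C x := ⟨_, rfl⟩
  have hfrac_pos : 0 < 1/(2*π) * f₁C x := mul_pos (by positivity) hf₁pos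
  have hfrac_lt : 1/(2*π) * f₁C x < 2 := by
    have h1 : 1/(2*π) * f₁C x < 1/(2*π) * (4*π) :=
      mul_lt_mul_of_pos_left hf₁lt (by positivity)
    have h2 : 1/(2*π) * (4*π) = 2 := by field_simp; ring
    linarith
  have hu₀1 : u₀ < 1 := by rw [hu₀]; linarith
  have hu₀m1 : -1 < u₀ := by rw [hu₀]; linarith
  have hu₀sq : 0 < 1 - u₀^2 := by nlinarith
  have hw : 0 < Real.sqrt (1 - u₀^2) := Real.sqrt_pos.mpr hu₀sq
  -- derivative of Φ₁
  have hval : HasDerivAt (fun θ => 1 - 1/(2*π) * f₁C θ) (-(1/(2*π) * gC x)) x :=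
    (hf₁C_deriv.const_mul (1/(2*π))).const_sub 1
  have harc : HasDerivAt Real.arccos (-(1/Real.sqrt (1 - u₀^2))) u₀ :=
    Real.hasDerivAt_arccos (ne_of_gt hu₀m1) (ne_of_lt hu₀1)
  have hΦ₁x : HasDerivAt (fun θ => Real.arccos (1 - 1/(2*π) * f₁C θ))
      (-(1/Real.sqrt (1 - u₀^2)) * -(1/(2*π) * gC x)) x := by
    have harc' : HasDerivAt Real.arccos (-(1/Real.sqrt (1 - u₀^2)))
        ((fun θ => 1 - 1/(2*π) * f₁C θ) x) := by
      show HasDerivAt Real.arccos _ (1 - 1/(2*π) * f₁C x)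
      rw [← hu₀]; exact harc
    exact HasDerivAt.comp (h₂ := Real.arccos) (h := fun θ => 1 - 1/(2*π) * f₁C θ) x harc' hval
  have hΦ₁ev : Φ₁ =ᶠ[𝓝 x] fun θ => Real.arccos (1 - 1/(2*π) * f₁C θ) := by
    filter_upwards [hKx] with θ hθ
    rw [hΦ₁ θ, hinner θ hθ]
  have hΦ₁deriv : HasDerivAt Φ₁ (-(1/Real.sqrt (1 - u₀^2)) * -(1/(2*π) * gC x)) x :=
    hΦ₁x.congr_of_eventuallyEq hΦ₁ev
  -- derivative of the second component
  set fstL := ContinuousLinearMap.fst ℝ ℝ ℝ with hfstLdef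
  set sndL := ContinuousLinearMap.snd ℝ ℝ ℝ with hsndLdef
  have hcontAt : ContinuousAt lamp (x,y) := hcont.continuousAt hKnhds
  have hU : (Ioo (0:ℝ) π ×ˢ Ioo (0:ℝ) (2*π)) ∈ 𝓝 ((x,y):ℝ×ℝ) :=
    (isOpen_Ioo.prod isOpen_Ioo).mem_nhds ⟨⟨hx0, hxπ⟩, ⟨hy0, hy2π⟩⟩
  set Rf : ℝ×ℝ → ℝ := fun q => ∫ τ in y..q.2, lam q.1 τ with hRdef
  have hR : HasFDerivAt Rf ((lam x y) • sndL) (x, y) := by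
    apply HasFDerivAt.of_isLittleO
    rw [Asymptotics.isLittleO_iff]
    intro c hc
    obtain ⟨δ, hδpos, hδ⟩ := Metric.continuousAt_iff.mp hcontAt c hc
    filter_upwards [hU, Metric.ball_mem_nhds ((x,y):ℝ×ℝ) hδpos] with q hqU hqball
    obtain ⟨hq1, hq2⟩ := hqU
    have hq1' : q.1 ∈ Icc (0:ℝ) π := ⟨hq1.1.le, hq1.2.le⟩
    have hint1 : IntervalIntegrable (fun τ => lam q.1 τ) volume y q.2 :=
      hIntLam q.1 hq1' y hymem q.2 ⟨hq2.1.le, hq2.2.le⟩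
    have heq : Rf q - Rf (x,y) - ((lam x y) • sndL) (q - ((x,y):ℝ×ℝ))
        = ∫ τ in y..q.2, (lam q.1 τ - lam x y) := by
      rw [intervalIntegral.integral_sub hint1 intervalIntegrable_const,
        intervalIntegral.integral_const]
      simp [hRdef, hsndLdef, intervalIntegral.integral_same, smul_eq_mul]
      ring
    rw [heq]
    have hd : dist q ((x,y):ℝ×ℝ) < δ := Metric.mem_ball.mp hqball
    have h1d : dist q.1 x ≤ dist q ((x,y):ℝ×ℝ) := by
      rw [Prod.dist_eq]; exact le_max_left _ _
    have h2d : dist q.2 y ≤ dist q ((x,y):ℝ×ℝ) := by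
      rw [Prod.dist_eq]; exact le_max_right _ _
    have hb : ∀ τ ∈ Set.uIoc y q.2, ‖lam q.1 τ - lam x y‖ ≤ c := by
      intro τ hτ
      have habs : |τ - y| ≤ |q.2 - y| := by
        rcases le_total y q.2 with h | h
        · rw [uIoc_of_le h] at hτ
          rw [abs_of_nonneg (by linarith [hτ.1] : (0:ℝ) ≤ τ - y),
            abs_of_nonneg (by linarith : (0:ℝ) ≤ q.2 - y)]
          linarith [hτ.2]
        · rw [uIoc_of_ge h] at hτ
          rw [abs_of_nonpos (by linarith [hτ.2] : τ - y ≤ 0),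
            abs_of_nonpos (by linarith : q.2 - y ≤ 0)]
          linarith [hτ.1]
      have hdq : dist ((q.1, τ) : ℝ×ℝ) ((x,y):ℝ×ℝ) < δ := by
        rw [Prod.dist_eq]
        apply max_lt (lt_of_le_of_lt h1d hd)
        calc dist τ y = |τ - y| := Real.dist_eq τ y
          _ ≤ |q.2 - y| := habs
          _ = dist q.2 y := (Real.dist_eq q.2 y).symm
          _ ≤ dist q ((x,y):ℝ×ℝ) := h2d
          _ < δ := hd
      have hlt := hδ hdq
      rw [Real.dist_eq] at hlt
      exact le_of_lt hlt
    calc ‖∫ τ in y..q.2, (lam q.1 τ - lam x y)‖ ≤ c * |q.2 - y| :=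
        intervalIntegral.norm_integral_le_of_norm_le_const hb
      _ ≤ c * ‖q - ((x,y):ℝ×ℝ)‖ := by
          apply mul_le_mul_of_nonneg_left _ hc.le
          have h3 := norm_snd_le (q - ((x,y):ℝ×ℝ))
          rw [Prod.snd_sub] at h3
          simpa [Real.norm_eq_abs] using h3
  have HGp := key y hymem
  have HH := key (2*π) ⟨h2π.le, le_rfl⟩
  have hGp1 : HasFDerivAt (fun q : ℝ×ℝ => ∫ τ in (0:ℝ)..y, lam q.1 τ)
      ((∫ τ in (0:ℝ)..y, dlam τ) • fstL) (x,y) :=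
    HGp.comp_hasFDerivAt (f := Prod.fst) (x,y) hasFDerivAt_fst
  have hGev : (fun q : ℝ×ℝ => ∫ τ in (0:ℝ)..q.2, lam q.1 τ)
      =ᶠ[𝓝 ((x,y):ℝ×ℝ)] fun q => (∫ τ in (0:ℝ)..y, lam q.1 τ) + Rf q := by
    filter_upwards [hU] with q hq
    obtain ⟨hq1, hq2⟩ := hq
    exact (intervalIntegral.integral_add_adjacent_intervals
      (hIntLam q.1 ⟨hq1.1.le, hq1.2.le⟩ 0 ⟨le_rfl, h2π.le⟩ y hymem)
      (hIntLam q.1 ⟨hq1.1.le, hq1.2.le⟩ y hymem q.2 ⟨hq2.1.le, hq2.2.le⟩)).symm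
  have hG : HasFDerivAt (fun q : ℝ×ℝ => ∫ τ in (0:ℝ)..q.2, lam q.1 τ)
      ((∫ τ in (0:ℝ)..y, dlam τ) • fstL + lam x y • sndL) (x,y) :=
    (hGp1.add hR).congr_of_eventuallyEq hGev
  have hHx_pos : 0 < ∫ τ in (0:ℝ)..(2*π), lam x τ := hHpos x hxmem
  have hHinv : HasDerivAt (fun θ => (∫ τ in (0:ℝ)..(2*π), lam θ τ)⁻¹)
      (-(∫ τ in (0:ℝ)..(2*π), dlam τ) / (∫ τ in (0:ℝ)..(2*π), lam x τ)^2) x :=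
    HH.inv (ne_of_gt hHx_pos)
  have hHinvf : HasFDerivAt (fun q : ℝ×ℝ => (∫ τ in (0:ℝ)..(2*π), lam q.1 τ)⁻¹)
      ((-(∫ τ in (0:ℝ)..(2*π), dlam τ) / (∫ τ in (0:ℝ)..(2*π), lam x τ)^2) • fstL) (x,y) :=
    hHinv.comp_hasFDerivAt (f := Prod.fst) (x,y) hasFDerivAt_fst
  have hnum : HasFDerivAt (fun q : ℝ×ℝ => 2*π * ∫ τ in (0:ℝ)..q.2, lam q.1 τ)
      ((2*π : ℝ) • ((∫ τ in (0:ℝ)..y, dlam τ) • fstL + lam x y • sndL)) (x,y) :=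
    hG.const_mul (2*π)
  have hfull := hnum.mul hHinvf
  have hΦ₂fun : (fun q : ℝ×ℝ => Φ₂ q.1 q.2) = fun q : ℝ×ℝ =>
      (2*π * ∫ τ in (0:ℝ)..q.2, lam q.1 τ) * (∫ τ in (0:ℝ)..(2*π), lam q.1 τ)⁻¹ := by
    funext q; rw [hΦ₂ q.1 q.2, div_eq_mul_inv]
  have hΦ₂fd : HasFDerivAt (fun q : ℝ×ℝ => Φ₂ q.1 q.2)
      ((2*π * ∫ τ in (0:ℝ)..y, lam x τ) •
        ((-(∫ τ in (0:ℝ)..(2*π), dlam τ) / (∫ τ in (0:ℝ)..(2*π), lam x τ)^2) • fstL) +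
       ((∫ τ in (0:ℝ)..(2*π), lam x τ)⁻¹) •
        ((2*π : ℝ) • ((∫ τ in (0:ℝ)..y, dlam τ) • fstL + lam x y • sndL))) (x,y) := by
    rw [hΦ₂fun]; exact hfull
  -- assemble
  have hΦ₁fd : HasFDerivAt (fun q : ℝ×ℝ => Φ₁ q.1)
      ((-(1/Real.sqrt (1 - u₀^2)) * -(1/(2*π) * gC x)) • fstL) (x,y) :=
    hΦ₁deriv.comp_hasFDerivAt (f := Prod.fst) (x,y) hasFDerivAt_fst
  have hΦfun : Φ = fun q : ℝ×ℝ => (Φ₁ q.1, Φ₂ q.1 q.2) := funext hΦ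
  have hΦfd : HasFDerivAt Φ
      (((-(1/Real.sqrt (1 - u₀^2)) * -(1/(2*π) * gC x)) • fstL).prod
       ((2*π * ∫ τ in (0:ℝ)..y, lam x τ) •
        ((-(∫ τ in (0:ℝ)..(2*π), dlam τ) / (∫ τ in (0:ℝ)..(2*π), lam x τ)^2) • fstL) +
       ((∫ τ in (0:ℝ)..(2*π), lam x τ)⁻¹) •
        ((2*π : ℝ) • ((∫ τ in (0:ℝ)..y, dlam τ) • fstL + lam x y • sndL)))) (x,y) := by
    rw [hΦfun]; exact hΦ₁fd.prodMk hΦ₂fd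
  -- sin of Φ₁
  have hsin : Real.sin (Φ₁ x) = Real.sqrt (1 - u₀^2) := by
    rw [hΦ₁ x, hinner x hxmem, ← hu₀, Real.sin_arccos]
  refine ⟨hΦfd.differentiableAt, ?_, ?_⟩
  · rw [hΦfd.fderiv]
    have hgCx : gC x = (∫ τ in (0:ℝ)..(2*π), lam x τ) * Real.sin x := by
      rw [hgCdef]; dsimp only; rw [hHeq x hxmem]
    rw [det_aux (a := -(1/Real.sqrt (1 - u₀^2)) * -(1/(2*π) * gC x))
      (c := (∫ τ in (0:ℝ)..(2*π), lam x τ)⁻¹ * (2*π * lam x y))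
      (by simp [hfstLdef, hsndLdef] <;> ring) (by simp [hfstLdef, hsndLdef] <;> ring)
      (by simp [hfstLdef, hsndLdef] <;> ring)]
    rw [hsin, hgCx]
    have hπne : (π : ℝ) ≠ 0 := ne_of_gt hπ
    have hHne : (∫ τ in (0:ℝ)..(2*π), lam x τ) ≠ 0 := ne_of_gt hHx_pos
    have hwne : Real.sqrt (1 - u₀^2) ≠ 0 := ne_of_gt hw
    field_simp
  · rw [hsin]
    apply div_pos (mul_pos (hpos (x,y) ⟨hxmem, hymem⟩)
      (Real.sin_pos_of_pos_of_lt_pi hx0 hxπ)) hw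
end

section
/- The map Φ : Ω̄ → Ω̄, Φ(θ¹,θ²) := (Φ₁(θ¹), Φ₂(θ¹,θ²)), is a homeomorphism of the closed rectangle Ω̄ = [0,π] × [0,2π] onto itself: it is a continuous bijection of Ω̄ onto Ω̄ with continuous inverse. -/
open Real Set MeasureTheory intervalIntegral

/-- A continuous bijection of a compact subset of `ℝ × ℝ` onto a subset of a T2 space
has a continuous inverse on that set. -/
private lemma compact_bij_inv {f : ℝ × ℝ → ℝ × ℝ} {K : Set (ℝ × ℝ)} (hK : IsCompact K)
    (hc : ContinuousOn f K) (hb : Set.BijOn f K K) :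
    ∃ Ψ : ℝ × ℝ → ℝ × ℝ, ContinuousOn Ψ K ∧ Set.InvOn Ψ f K K := by
  classical
  haveI : CompactSpace K := isCompact_iff_compactSpace.mp hK
  let e : K ≃ K := hb.equiv f
  have hce : Continuous e := hc.mapsToRestrict hb.mapsTo
  have hcesymm : Continuous (e.symm : K → K) := hce.continuous_symm_of_equiv_compact_to_t2
  refine ⟨fun y => if h : y ∈ K then ((e.symm ⟨y, h⟩ : K) : ℝ × ℝ) else y, ?_, ?_, ?_⟩
  · rw [continuousOn_iff_continuous_restrict]
    have hres : (K.restrict fun y => if h : y ∈ K then ((e.symm ⟨y, h⟩ : K) : ℝ × ℝ) else y)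
        = fun y : K => ((e.symm y : K) : ℝ × ℝ) := by
      funext y
      simp [Set.restrict, y.2]
    change Continuous (K.restrict fun y => if h : y ∈ K then ((e.symm ⟨y, h⟩ : K) : ℝ × ℝ) else y)
    rw [hres]
    exact continuous_subtype_val.comp hcesymm
  · intro x hx
    have hfx : f x ∈ K := hb.mapsTo hx
    have h1 : (⟨f x, hfx⟩ : K) = e ⟨x, hx⟩ := rfl
    simp only [dif_pos hfx, h1, Equiv.symm_apply_apply]
  · intro y hy
    simp only [dif_pos hy]
    have h2 : f ((e.symm ⟨y, hy⟩ : K) : ℝ × ℝ) = ((e (e.symm ⟨y, hy⟩) : K) : ℝ × ℝ) := rfl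
    rw [h2, Equiv.apply_symm_apply]

set_option maxHeartbeats 1000000 in
/-- The map `Φ : Ω̄ → Ω̄`, `Φ(θ¹,θ²) := (Φ₁(θ¹), Φ₂(θ¹,θ²))`, is a
homeomorphism of the closed rectangle `Ω̄ = [0,π] × [0,2π]` onto itself: it is a
continuous bijection of `Ω̄` onto `Ω̄` with continuous inverse. -/
theorem stmt_6
    (lam : ℝ → ℝ → ℝ)
    (hsmooth : ContDiffOn ℝ (⊤ : ℕ∞) (fun p : ℝ × ℝ => lam p.1 p.2)
      (Set.Icc (0:ℝ) π ×ˢ Set.Icc (0:ℝ) (2*π)))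
    (hpos : ∀ p ∈ Set.Icc (0:ℝ) π ×ˢ Set.Icc (0:ℝ) (2*π), 0 < lam p.1 p.2)
    (hnorm : (∫ σ in (0:ℝ)..π, ∫ τ in (0:ℝ)..(2*π), lam σ τ * Real.sin σ) = 4*π)
    (Φ₁ : ℝ → ℝ)
    (hΦ₁ : ∀ θ, Φ₁ θ = Real.arccos
      (1 - (1/(2*π)) * ∫ σ in (0:ℝ)..θ, ∫ τ in (0:ℝ)..(2*π), lam σ τ * Real.sin σ))
    (Φ₂ : ℝ → ℝ → ℝ)
    (hΦ₂ : ∀ θ1 θ2, Φ₂ θ1 θ2 =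
      2*π * (∫ τ in (0:ℝ)..θ2, lam θ1 τ) / ∫ τ in (0:ℝ)..(2*π), lam θ1 τ)
    (Φ : ℝ × ℝ → ℝ × ℝ)
    (hΦ : ∀ p : ℝ × ℝ, Φ p = (Φ₁ p.1, Φ₂ p.1 p.2)) :
    ContinuousOn Φ (Set.Icc (0:ℝ) π ×ˢ Set.Icc (0:ℝ) (2*π)) ∧
    Set.BijOn Φ (Set.Icc (0:ℝ) π ×ˢ Set.Icc (0:ℝ) (2*π))
      (Set.Icc (0:ℝ) π ×ˢ Set.Icc (0:ℝ) (2*π)) ∧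
    ∃ Ψ : ℝ × ℝ → ℝ × ℝ,
      ContinuousOn Ψ (Set.Icc (0:ℝ) π ×ˢ Set.Icc (0:ℝ) (2*π)) ∧
      Set.InvOn Ψ Φ (Set.Icc (0:ℝ) π ×ˢ Set.Icc (0:ℝ) (2*π))
        (Set.Icc (0:ℝ) π ×ˢ Set.Icc (0:ℝ) (2*π)) := by
  have pi_pos := Real.pi_pos
  have two_pi_pos : (0:ℝ) < 2*π := by positivity
  -- clamping maps
  set c1 : ℝ → ℝ := fun x => min (max x 0) π with hc1
  set c2 : ℝ → ℝ := fun x => min (max x 0) (2*π) with hc2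
  have hc1mem : ∀ x, c1 x ∈ Icc (0:ℝ) π :=
    fun x => ⟨le_min (le_max_right _ _) pi_pos.le, min_le_right _ _⟩
  have hc2mem : ∀ x, c2 x ∈ Icc (0:ℝ) (2*π) :=
    fun x => ⟨le_min (le_max_right _ _) two_pi_pos.le, min_le_right _ _⟩
  have hc1id : ∀ x ∈ Icc (0:ℝ) π, c1 x = x := by
    intro x hx; rw [hc1]; simp only; rw [max_eq_left hx.1, min_eq_left hx.2]
  have hc2id : ∀ x ∈ Icc (0:ℝ) (2*π), c2 x = x := by
    intro x hx; rw [hc2]; simp only; rw [max_eq_left hx.1, min_eq_left hx.2]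
  -- clamped lambda
  set m : ℝ → ℝ → ℝ := fun σ τ => lam (c1 σ) (c2 τ) with hm
  have hmc : Continuous (fun p : ℝ × ℝ => m p.1 p.2) := by
    have hproj : Continuous (fun p : ℝ × ℝ => (c1 p.1, c2 p.2)) :=
      (((continuous_fst.max continuous_const).min continuous_const)).prodMk
        (((continuous_snd.max continuous_const).min continuous_const))
    exact hsmooth.continuousOn.comp_continuous hproj
      (fun p => Set.mk_mem_prod (hc1mem p.1) (hc2mem p.2))
  have hmc1 : ∀ a, Continuous (m a) := fun a => hmc.comp (Continuous.prodMk_right a)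
  have hm_pos : ∀ σ τ, 0 < m σ τ :=
    fun σ τ => hpos (c1 σ, c2 τ) (Set.mk_mem_prod (hc1mem σ) (hc2mem τ))
  have hm_eq : ∀ σ ∈ Icc (0:ℝ) π, ∀ τ ∈ Icc (0:ℝ) (2*π), m σ τ = lam σ τ := by
    intro σ hσ τ hτ; rw [hm]; simp only; rw [hc1id σ hσ, hc2id τ hτ]
  -- the primitive g
  set g : ℝ → ℝ → ℝ := fun a b => ∫ τ in (0:ℝ)..b, m a τ with hg
  have hgc : Continuous (fun p : ℝ × ℝ => g p.1 p.2) :=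
    continuous_parametric_primitive_of_continuous hmc
  have hgmono : ∀ a, StrictMono (g a) := by
    intro a b b' hbb'
    have h1 : g a b + ∫ τ in b..b', m a τ = g a b' :=
      integral_add_adjacent_intervals ((hmc1 a).intervalIntegrable _ _)
        ((hmc1 a).intervalIntegrable _ _)
    have h2 : 0 < ∫ τ in b..b', m a τ :=
      intervalIntegral_pos_of_pos ((hmc1 a).intervalIntegrable _ _) (hm_pos a) hbb'
    linarith
  have hg2pos : ∀ a, 0 < g a (2*π) :=
    fun a => intervalIntegral_pos_of_pos ((hmc1 a).intervalIntegrable _ _) (hm_pos a) two_pi_pos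
  have hg0 : ∀ a, g a 0 = 0 := fun a => integral_same
  -- the function h
  set h : ℝ → ℝ := fun σ => ∫ τ in (0:ℝ)..(2*π), m σ τ * Real.sin σ with hh
  have hhc : Continuous h := by
    have : Continuous (Function.uncurry fun σ τ => m σ τ * Real.sin σ) :=
      hmc.mul (Real.continuous_sin.comp continuous_fst)
    exact continuous_parametric_intervalIntegral_of_continuous' this 0 (2*π)
  have hh_pos : ∀ σ ∈ Ioo (0:ℝ) π, 0 < h σ := by
    intro σ hσ
    exact intervalIntegral_pos_of_pos
      (((hmc1 σ).mul continuous_const).intervalIntegrable _ _)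
      (fun τ => mul_pos (hm_pos σ τ) (Real.sin_pos_of_pos_of_lt_pi hσ.1 hσ.2)) two_pi_pos
  -- the primitive F
  set F : ℝ → ℝ := fun θ => ∫ σ in (0:ℝ)..θ, h σ with hF
  have hFc : Continuous F := continuous_primitive (fun a b => hhc.intervalIntegrable a b) 0
  have hFmono : StrictMonoOn F (Icc (0:ℝ) π) := by
    intro a ha b hb hab
    have h1 : F a + ∫ σ in a..b, h σ = F b :=
      integral_add_adjacent_intervals (hhc.intervalIntegrable _ _) (hhc.intervalIntegrable _ _)
    have h2 : 0 < ∫ σ in a..b, h σ :=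
      intervalIntegral_pos_of_pos_on (hhc.intervalIntegrable _ _)
        (fun x hx => hh_pos x ⟨lt_of_le_of_lt ha.1 hx.1, lt_of_lt_of_le hx.2 hb.2⟩) hab
    linarith
  have hF0 : F 0 = 0 := integral_same
  -- translation lemmas
  have hg_eq : ∀ a ∈ Icc (0:ℝ) π, ∀ b ∈ Icc (0:ℝ) (2*π),
      (∫ τ in (0:ℝ)..b, lam a τ) = g a b := by
    intro a ha b hb
    apply intervalIntegral.integral_congr
    intro τ hτ
    rw [uIcc_of_le hb.1] at hτ
    exact (hm_eq a ha τ ⟨hτ.1, hτ.2.trans hb.2⟩).symm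
  have hh_eq : ∀ a ∈ Icc (0:ℝ) π,
      (∫ τ in (0:ℝ)..(2*π), lam a τ * Real.sin a) = h a := by
    intro a ha
    apply intervalIntegral.integral_congr
    intro τ hτ
    rw [uIcc_of_le two_pi_pos.le] at hτ
    show lam a τ * Real.sin a = m a τ * Real.sin a
    rw [hm_eq a ha τ hτ]
  have hF_eq : ∀ θ ∈ Icc (0:ℝ) π,
      (∫ σ in (0:ℝ)..θ, ∫ τ in (0:ℝ)..(2*π), lam σ τ * Real.sin σ) = F θ := by
    intro θ hθ
    apply intervalIntegral.integral_congr
    intro σ hσ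
    rw [uIcc_of_le hθ.1] at hσ
    exact hh_eq σ ⟨hσ.1, hσ.2.trans hθ.2⟩
  have hFπ : F π = 4*π := by rw [← hF_eq π ⟨pi_pos.le, le_rfl⟩]; exact hnorm
  have hFmem : ∀ θ ∈ Icc (0:ℝ) π, F θ ∈ Icc (0:ℝ) (4*π) := by
    intro θ hθ
    constructor
    · calc (0:ℝ) = F 0 := hF0.symm
        _ ≤ F θ := hFmono.monotoneOn ⟨le_rfl, pi_pos.le⟩ hθ hθ.1
    · calc F θ ≤ F π := hFmono.monotoneOn hθ ⟨pi_pos.le, le_rfl⟩ hθ.2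
        _ = 4*π := hFπ
  -- properties of Φ₁
  set A : ℝ → ℝ := fun θ => Real.arccos (1 - (1/(2*π)) * F θ) with hA
  have hAc : Continuous A :=
    Real.continuous_arccos.comp (continuous_const.sub (continuous_const.mul hFc))
  have hΦ₁eq : ∀ θ ∈ Icc (0:ℝ) π, Φ₁ θ = A θ := by
    intro θ hθ; rw [hΦ₁ θ, hF_eq θ hθ]
  have hqmem : ∀ θ ∈ Icc (0:ℝ) π, (1 - (1/(2*π)) * F θ) ∈ Icc (-1:ℝ) 1 := by
    intro θ hθ
    have h1 := hFmem θ hθ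
    have hk : (0:ℝ) < 1/(2*π) := by positivity
    have h2 : (1/(2*π)) * F θ ≤ (1/(2*π)) * (4*π) := by
      apply mul_le_mul_of_nonneg_left h1.2 hk.le
    have h3 : (0:ℝ) ≤ (1/(2*π)) * F θ := mul_nonneg hk.le h1.1
    have h4 : (1/(2*π)) * (4*π) = 2 := by field_simp; ring
    constructor <;> [linarith; linarith]
  have hΦ₁mono : StrictMonoOn Φ₁ (Icc (0:ℝ) π) := by
    intro a ha b hb hab
    rw [hΦ₁eq a ha, hΦ₁eq b hb, hA]
    have hFab : F a < F b := hFmono ha hb hab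
    have hk : (0:ℝ) < 1/(2*π) := by positivity
    have hlt : 1 - (1/(2*π)) * F b < 1 - (1/(2*π)) * F a := by
      have := (mul_lt_mul_iff_right₀ hk).mpr hFab
      linarith
    exact Real.strictAntiOn_arccos (hqmem b hb) (hqmem a ha) hlt
  have hΦ₁0 : Φ₁ 0 = 0 := by
    rw [hΦ₁ 0, intervalIntegral.integral_same]
    norm_num [Real.arccos_one]
  have hΦ₁π : Φ₁ π = π := by
    rw [hΦ₁ π, hF_eq π ⟨pi_pos.le, le_rfl⟩, hFπ]
    have : 1 - 1/(2*π) * (4*π) = -1 := by field_simp; ring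
    rw [this, Real.arccos_neg_one]
  -- properties of Φ₂
  set G : ℝ → ℝ → ℝ := fun a b => 2*π * g a b / g a (2*π) with hG
  have hΦ₂eq : ∀ a ∈ Icc (0:ℝ) π, ∀ b ∈ Icc (0:ℝ) (2*π), Φ₂ a b = G a b := by
    intro a ha b hb
    rw [hΦ₂ a b, hg_eq a ha b hb, hg_eq a ha (2*π) ⟨two_pi_pos.le, le_rfl⟩]
  have hGmono : ∀ a, StrictMono (G a) := by
    intro a b b' hbb'
    rw [hG]
    simp only
    rw [div_lt_div_iff_of_pos_right (hg2pos a)]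
    exact (mul_lt_mul_iff_right₀ two_pi_pos).2 (hgmono a hbb')
  have hG0 : ∀ a, G a 0 = 0 := by
    intro a; rw [hG]; simp [hg0 a]
  have hG2π : ∀ a, G a (2*π) = 2*π := by
    intro a; rw [hG]; simp only
    rw [mul_div_assoc, div_self (hg2pos a).ne', mul_one]
  clear_value g h F A G
  have hden : Continuous (fun p : ℝ × ℝ => g p.1 (2*π)) :=
    hgc.comp (continuous_fst.prodMk continuous_const)
  have hBc : Continuous (fun p : ℝ × ℝ => G p.1 p.2) := by
    rw [hG]
    exact (continuous_const.mul hgc).div hden (fun p => (hg2pos p.1).ne')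
  have hGc : ∀ a, Continuous (G a) := fun a => hBc.comp (Continuous.prodMk_right a)
  have hGmem : ∀ a, ∀ b ∈ Icc (0:ℝ) (2*π), G a b ∈ Icc (0:ℝ) (2*π) := by
    intro a b hb
    constructor
    · calc (0:ℝ) = G a 0 := (hG0 a).symm
        _ ≤ G a b := (hGmono a).monotone hb.1
    · calc G a b ≤ G a (2*π) := (hGmono a).monotone hb.2
        _ = 2*π := hG2π a
  -- continuity of Φ
  have hΦcont : ContinuousOn Φ (Set.Icc (0:ℝ) π ×ˢ Set.Icc (0:ℝ) (2*π)) := by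
    refine ContinuousOn.congr (f := fun p : ℝ × ℝ => (A p.1, G p.1 p.2))
      (((hAc.comp continuous_fst).prodMk hBc).continuousOn) ?_
    intro p hp
    rw [hΦ p, hΦ₁eq p.1 hp.1, hΦ₂eq p.1 hp.1 p.2 hp.2]
  -- bijectivity
  have hmaps : Set.MapsTo Φ (Set.Icc (0:ℝ) π ×ˢ Set.Icc (0:ℝ) (2*π))
      (Set.Icc (0:ℝ) π ×ˢ Set.Icc (0:ℝ) (2*π)) := by
    intro p hp
    rw [hΦ p]
    refine Set.mk_mem_prod ?_ ?_
    · rw [hΦ₁ p.1]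
      exact ⟨Real.arccos_nonneg _, Real.arccos_le_pi _⟩
    · rw [hΦ₂eq p.1 hp.1 p.2 hp.2]
      exact hGmem p.1 p.2 hp.2
  have hinj : Set.InjOn Φ (Set.Icc (0:ℝ) π ×ˢ Set.Icc (0:ℝ) (2*π)) := by
    intro p hp q hq heq
    rw [hΦ p, hΦ q, Prod.mk.injEq] at heq
    have e1 : p.1 = q.1 := hΦ₁mono.injOn hp.1 hq.1 heq.1
    have h2 : Φ₂ p.1 p.2 = Φ₂ p.1 q.2 := by rw [heq.2, e1]
    rw [hΦ₂eq p.1 hp.1 p.2 hp.2, e1, hΦ₂eq q.1 hq.1 q.2 hq.2] at h2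
    have e2 : p.2 = q.2 := (hGmono q.1).injective h2
    exact Prod.ext e1 e2
  have hsurj : Set.SurjOn Φ (Set.Icc (0:ℝ) π ×ˢ Set.Icc (0:ℝ) (2*π))
      (Set.Icc (0:ℝ) π ×ˢ Set.Icc (0:ℝ) (2*π)) := by
    intro y hy
    have hΦ₁cont : ContinuousOn Φ₁ (Icc (0:ℝ) π) :=
      hAc.continuousOn.congr (fun θ hθ => hΦ₁eq θ hθ)
    obtain ⟨a, ha, hae⟩ := intermediate_value_Icc pi_pos.le hΦ₁cont
      (show y.1 ∈ Icc (Φ₁ 0) (Φ₁ π) by rw [hΦ₁0, hΦ₁π]; exact hy.1)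
    obtain ⟨b, hb, hbe⟩ := intermediate_value_Icc two_pi_pos.le (hGc a).continuousOn
      (show y.2 ∈ Icc (G a 0) (G a (2*π)) by rw [hG0, hG2π]; exact hy.2)
    refine ⟨(a, b), Set.mk_mem_prod ha hb, ?_⟩
    rw [hΦ (a, b)]
    exact Prod.ext hae ((hΦ₂eq a ha b hb).trans hbe)
  have hbij : Set.BijOn Φ (Set.Icc (0:ℝ) π ×ˢ Set.Icc (0:ℝ) (2*π))
      (Set.Icc (0:ℝ) π ×ˢ Set.Icc (0:ℝ) (2*π)) := ⟨hmaps, hinj, hsurj⟩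
  exact ⟨hΦcont, hbij,
    compact_bij_inv (isCompact_Icc.prod isCompact_Icc) hΦcont hbij⟩
end

section
/- The restriction of Φ to the open rectangle Ω = (0,π) × (0,2π) is an orientation-preserving C¹-diffeomorphism of Ω onto Ω: Φ maps Ω bijectively onto Ω, Φ is continuously differentiable on Ω with everywhere strictly positive Jacobian determinant, and its inverse is continuously differentiable on Ω. -/
open Real Set MeasureTheory intervalIntegral

section Aux
open Function

-- aux lemma A: determinant formula
lemma aux_det_formula (L : ℝ × ℝ →L[ℝ] ℝ × ℝ) :
    LinearMap.det (L.toLinearMap) =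
      (L (1,0)).1 * (L (0,1)).2 - (L (0,1)).1 * (L (1,0)).2 := by
  rw [← LinearMap.det_toMatrix (Module.Basis.finTwoProd ℝ), Matrix.det_fin_two]
  simp [LinearMap.toMatrix_apply, Module.Basis.finTwoProd_zero, Module.Basis.finTwoProd_one,
    Module.Basis.coe_finTwoProd_repr]

-- f has continuous derivative g on an open nbhd => C¹ at x
lemma aux_contDiffAt_one {f g : ℝ → ℝ} {u : Set ℝ} {x : ℝ}
    (hu : u ∈ nhds x) (hd : ∀ y ∈ u, HasDerivAt f (g y) y) (hg : ContinuousOn g u) :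
    ContDiffAt ℝ 1 f x := by
  have h1 : ((0:ℕ) + 1 : WithTop ℕ∞) = 1 := by norm_num
  rw [← h1, contDiffAt_succ_iff_hasFDerivAt]
  refine ⟨fun y => (1 : ℝ →L[ℝ] ℝ).smulRight (g y), ⟨u, hu, fun y hy => (hd y hy).hasFDerivAt⟩, ?_⟩
  rw [show ((0:ℕ) : WithTop ℕ∞) = 0 by norm_num, contDiffAt_zero]
  refine ⟨u, hu, ?_⟩
  have : Continuous fun r : ℝ => (1 : ℝ →L[ℝ] ℝ).smulRight r :=
    (ContinuousLinearMap.smulRightL ℝ ℝ ℝ (1 : ℝ →L[ℝ] ℝ)).continuous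
  exact this.comp_continuousOn hg

-- ℝ² version
lemma aux_contDiffAt_one2 {f : ℝ × ℝ → ℝ} {c d : ℝ × ℝ → ℝ} {u : Set (ℝ × ℝ)} {x : ℝ × ℝ}
    (hu : u ∈ nhds x)
    (hd : ∀ p ∈ u, HasFDerivAt f
      (c p • ContinuousLinearMap.fst ℝ ℝ ℝ + d p • ContinuousLinearMap.snd ℝ ℝ ℝ) p)
    (hc : ContinuousOn c u) (hdc : ContinuousOn d u) :
    ContDiffAt ℝ 1 f x := by
  have h1 : ((0:ℕ) + 1 : WithTop ℕ∞) = 1 := by norm_num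
  rw [← h1, contDiffAt_succ_iff_hasFDerivAt]
  refine ⟨fun p => c p • ContinuousLinearMap.fst ℝ ℝ ℝ + d p • ContinuousLinearMap.snd ℝ ℝ ℝ,
    ⟨u, hu, hd⟩, ?_⟩
  rw [show ((0:ℕ) : WithTop ℕ∞) = 0 by norm_num, contDiffAt_zero]
  exact ⟨u, hu, (hc.smul continuousOn_const).add (hdc.smul continuousOn_const)⟩

lemma aux_hasFDerivAt_endpoint {f : ℝ → ℝ → ℝ} (hf : Continuous (uncurry f)) (x1 y1 : ℝ) :
    HasFDerivAt (fun p : ℝ × ℝ => ∫ τ in y1..p.2, f p.1 τ)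
      ((f x1 y1) • ContinuousLinearMap.snd ℝ ℝ ℝ) (x1, y1) := by
  rw [hasFDerivAt_iff_isLittleO_nhds_zero, Asymptotics.isLittleO_iff]
  intro c hc
  have hcont : ContinuousAt (uncurry f) (x1, y1) := hf.continuousAt
  rw [Metric.continuousAt_iff] at hcont
  obtain ⟨δ, hδ, hball⟩ := hcont c hc
  filter_upwards [Metric.ball_mem_nhds (0 : ℝ × ℝ) hδ] with q hq
  have hqn : ‖q‖ < δ := by rwa [Metric.mem_ball, dist_zero_right] at hq
  have hq1 : |q.1| < δ := lt_of_le_of_lt (by rw [Prod.norm_def]; exact le_max_left _ _) hqn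
  have hq2 : |q.2| < δ := lt_of_le_of_lt (by rw [Prod.norm_def]; exact le_max_right _ _) hqn
  have key : (∫ τ in y1..(y1 + q.2), f (x1 + q.1) τ) - f x1 y1 * q.2
      = ∫ τ in y1..(y1 + q.2), (f (x1 + q.1) τ - f x1 y1) := by
    have h1 : IntervalIntegrable (fun τ => f (x1 + q.1) τ) volume y1 (y1 + q.2) :=
      (hf.comp (continuous_const.prodMk continuous_id) :
        Continuous fun τ : ℝ => f (x1 + q.1) τ).intervalIntegrable _ _
    rw [intervalIntegral.integral_sub h1 intervalIntegrable_const,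
      intervalIntegral.integral_const, add_sub_cancel_left, smul_eq_mul, mul_comm]
  have hbound : ∀ τ ∈ Set.uIoc y1 (y1 + q.2), ‖f (x1 + q.1) τ - f x1 y1‖ ≤ c := by
    intro τ hτ
    have hτd : |τ - y1| ≤ |q.2| := by
      rcases Set.mem_uIoc.1 hτ with h | h
      · rw [abs_le]
        refine ⟨by nlinarith [h.1, abs_nonneg q.2], by nlinarith [h.2, le_abs_self q.2]⟩
      · rw [abs_le]
        refine ⟨by nlinarith [h.1, neg_abs_le q.2], by nlinarith [h.2, abs_nonneg q.2]⟩
    have hd : dist (x1 + q.1, τ) (x1, y1) < δ := by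
      rw [Prod.dist_eq]
      exact max_lt (by simpa [Real.dist_eq] using hq1)
        (lt_of_le_of_lt (by rw [Real.dist_eq]; exact hτd) hq2)
    have := hball hd
    rw [show uncurry f (x1 + q.1, τ) = f (x1 + q.1) τ from rfl,
      show uncurry f (x1, y1) = f x1 y1 from rfl, Real.dist_eq] at this
    exact this.le
  have habs : |q.2| ≤ ‖q‖ := by rw [Prod.norm_def]; exact le_max_right _ _
  calc ‖(∫ τ in y1..((x1, y1) + q).2, f ((x1, y1) + q).1 τ)
        - (∫ τ in y1..(x1, y1).2, f (x1, y1).1 τ)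
        - ((f x1 y1) • ContinuousLinearMap.snd ℝ ℝ ℝ) q‖
      = ‖(∫ τ in y1..(y1 + q.2), f (x1 + q.1) τ) - f x1 y1 * q.2‖ := by
        simp [intervalIntegral.integral_same, Prod.fst_add, Prod.snd_add]
    _ = ‖∫ τ in y1..(y1 + q.2), (f (x1 + q.1) τ - f x1 y1)‖ := by rw [key]
    _ ≤ c * |y1 + q.2 - y1| := intervalIntegral.norm_integral_le_of_norm_le_const hbound
    _ ≤ c * ‖q‖ := by rw [add_sub_cancel_left]; nlinarith [hc.le, abs_nonneg q.2]

lemma aux_hasFDerivAt_primitive {f f' : ℝ → ℝ → ℝ} {U : Set ℝ} (hU : IsOpen U)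
    (hf : Continuous (uncurry f)) (hf' : Continuous (uncurry f'))
    (hd : ∀ x ∈ U, ∀ τ : ℝ, HasDerivAt (fun s => f s τ) (f' x τ) x)
    {x1 : ℝ} (hx : x1 ∈ U) (y1 : ℝ) :
    HasFDerivAt (fun p : ℝ × ℝ => ∫ τ in (0:ℝ)..p.2, f p.1 τ)
      ((∫ τ in (0:ℝ)..y1, f' x1 τ) • ContinuousLinearMap.fst ℝ ℝ ℝ +
       (f x1 y1) • ContinuousLinearMap.snd ℝ ℝ ℝ) (x1, y1) := by
  obtain ⟨ε, hε, hballU⟩ := Metric.isOpen_iff.1 hU x1 hx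
  have hε2 : 0 < ε / 2 := by linarith
  have hsub : Metric.closedBall x1 (ε / 2) ⊆ U :=
    (Metric.closedBall_subset_ball (by linarith)).trans hballU
  have hK : IsCompact (Metric.closedBall x1 (ε / 2) ×ˢ uIcc (0:ℝ) y1) :=
    (isCompact_closedBall _ _).prod isCompact_uIcc
  obtain ⟨C, hC⟩ := hK.exists_bound_of_continuousOn (hf'.continuousOn)
  have contf : ∀ x : ℝ, Continuous fun τ => f x τ :=
    fun x => hf.comp (continuous_const.prodMk continuous_id)
  have contf' : ∀ x : ℝ, Continuous fun τ => f' x τ :=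
    fun x => hf'.comp (continuous_const.prodMk continuous_id)
  have hA : HasDerivAt (fun x => ∫ τ in (0:ℝ)..y1, f x τ) (∫ τ in (0:ℝ)..y1, f' x1 τ) x1 := by
    refine (intervalIntegral.hasDerivAt_integral_of_dominated_loc_of_deriv_le (Metric.ball_mem_nhds x1 hε2)
      (F := f) (F' := f') (bound := fun _ => C)
      (Filter.Eventually.of_forall fun x => (contf x).aestronglyMeasurable)
      ((contf x1).intervalIntegrable _ _)
      (contf' x1).aestronglyMeasurable
      (Filter.Eventually.of_forall fun t ht x hxb => ?_)
      (intervalIntegrable_const)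
      (Filter.Eventually.of_forall fun t ht x hxb => hd x (hsub (Metric.ball_subset_closedBall hxb)) t)).2
    exact hC (x, t) ⟨Metric.ball_subset_closedBall hxb, uIoc_subset_uIcc ht⟩
  have h1 : HasFDerivAt (fun p : ℝ × ℝ => ∫ τ in (0:ℝ)..y1, f p.1 τ)
      ((∫ τ in (0:ℝ)..y1, f' x1 τ) • ContinuousLinearMap.fst ℝ ℝ ℝ) (x1, y1) :=
    hA.comp_hasFDerivAt (f := Prod.fst) (x1, y1) hasFDerivAt_fst
  have h2 := aux_hasFDerivAt_endpoint hf x1 y1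
  have heq : (fun p : ℝ × ℝ => ∫ τ in (0:ℝ)..p.2, f p.1 τ)
      = fun p : ℝ × ℝ => (∫ τ in (0:ℝ)..y1, f p.1 τ) + ∫ τ in y1..p.2, f p.1 τ := by
    funext p
    rw [integral_add_adjacent_intervals ((contf p.1).intervalIntegrable _ _)
      ((contf p.1).intervalIntegrable _ _)]
  rw [heq]
  exact h1.add h2

end Aux

set_option maxHeartbeats 1000000 in
/-- The restriction of `Φ` to the open rectangle `Ω = (0,π) × (0,2π)` is an
orientation-preserving C¹-diffeomorphism of `Ω` onto `Ω`: `Φ` maps `Ω` bijectively onto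
`Ω`, `Φ` is continuously differentiable on `Ω` with everywhere strictly positive Jacobian
determinant, and its inverse is continuously differentiable on `Ω`. -/
theorem stmt_7
    (lam : ℝ → ℝ → ℝ)
    (hsmooth : ContDiffOn ℝ (⊤ : ℕ∞) (fun p : ℝ × ℝ => lam p.1 p.2)
      (Set.Icc (0:ℝ) π ×ˢ Set.Icc (0:ℝ) (2*π)))
    (hpos : ∀ p ∈ Set.Icc (0:ℝ) π ×ˢ Set.Icc (0:ℝ) (2*π), 0 < lam p.1 p.2)
    (hnorm : (∫ σ in (0:ℝ)..π, ∫ τ in (0:ℝ)..(2*π), lam σ τ * Real.sin σ) = 4*π)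
    (Φ₁ : ℝ → ℝ)
    (hΦ₁ : ∀ θ, Φ₁ θ = Real.arccos
      (1 - (1/(2*π)) * ∫ σ in (0:ℝ)..θ, ∫ τ in (0:ℝ)..(2*π), lam σ τ * Real.sin σ))
    (Φ₂ : ℝ → ℝ → ℝ)
    (hΦ₂ : ∀ θ1 θ2, Φ₂ θ1 θ2 =
      2*π * (∫ τ in (0:ℝ)..θ2, lam θ1 τ) / ∫ τ in (0:ℝ)..(2*π), lam θ1 τ)
    (Φ : ℝ × ℝ → ℝ × ℝ)
    (hΦ : ∀ p : ℝ × ℝ, Φ p = (Φ₁ p.1, Φ₂ p.1 p.2)) :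
    Set.BijOn Φ (Set.Ioo (0:ℝ) π ×ˢ Set.Ioo (0:ℝ) (2*π))
      (Set.Ioo (0:ℝ) π ×ˢ Set.Ioo (0:ℝ) (2*π)) ∧
    ContDiffOn ℝ 1 Φ (Set.Ioo (0:ℝ) π ×ˢ Set.Ioo (0:ℝ) (2*π)) ∧
    (∀ p ∈ Set.Ioo (0:ℝ) π ×ˢ Set.Ioo (0:ℝ) (2*π),
      0 < LinearMap.det ((fderiv ℝ Φ p).toLinearMap)) ∧
    ∃ Ψ : ℝ × ℝ → ℝ × ℝ,
      ContDiffOn ℝ 1 Ψ (Set.Ioo (0:ℝ) π ×ˢ Set.Ioo (0:ℝ) (2*π)) ∧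
      Set.InvOn Ψ Φ (Set.Ioo (0:ℝ) π ×ˢ Set.Ioo (0:ℝ) (2*π))
        (Set.Ioo (0:ℝ) π ×ˢ Set.Ioo (0:ℝ) (2*π)) := by
  have hπ : (0:ℝ) < π := Real.pi_pos
  have h2π : (0:ℝ) < 2*π := by positivity
  set Ω : Set (ℝ × ℝ) := Set.Ioo (0:ℝ) π ×ˢ Set.Ioo (0:ℝ) (2*π) with hΩdef
  set rect : Set (ℝ × ℝ) := Set.Icc (0:ℝ) π ×ˢ Set.Icc (0:ℝ) (2*π) with hrect
  have hΩopen : IsOpen Ω := isOpen_Ioo.prod isOpen_Ioo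
  -- clamping
  set clx : ℝ → ℝ := fun x => max 0 (min x π) with hclx
  set clt : ℝ → ℝ := fun t => max 0 (min t (2*π)) with hclt
  have hclx_mem : ∀ x, clx x ∈ Set.Icc (0:ℝ) π := by
    intro x
    exact ⟨le_max_left _ _, max_le hπ.le (min_le_right _ _)⟩
  have hclt_mem : ∀ t, clt t ∈ Set.Icc (0:ℝ) (2*π) := by
    intro t
    exact ⟨le_max_left _ _, max_le h2π.le (min_le_right _ _)⟩
  have hclx_id : ∀ x ∈ Set.Icc (0:ℝ) π, clx x = x := by
    intro x hx
    simp only [hclx, min_eq_left hx.2, max_eq_right hx.1]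
  have hclt_id : ∀ t ∈ Set.Icc (0:ℝ) (2*π), clt t = t := by
    intro t ht
    simp only [hclt, min_eq_left ht.2, max_eq_right ht.1]
  have hclx_cont : Continuous clx := continuous_const.max (continuous_id.min continuous_const)
  have hclt_cont : Continuous clt := continuous_const.max (continuous_id.min continuous_const)
  -- clamped lambda
  set lamC : ℝ → ℝ → ℝ := fun x t => lam (clx x) (clt t) with hlamCdef
  have hcl2 : Continuous fun p : ℝ × ℝ => (clx p.1, clt p.2) :=
    (hclx_cont.comp continuous_fst).prodMk (hclt_cont.comp continuous_snd)
  have hcl2_mem : ∀ p : ℝ × ℝ, (clx p.1, clt p.2) ∈ rect :=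
    fun p => ⟨hclx_mem p.1, hclt_mem p.2⟩
  have hlamC_cont : Continuous (Function.uncurry lamC) :=
    hsmooth.continuousOn.comp_continuous hcl2 hcl2_mem
  have hlamC_pos : ∀ x t, 0 < lamC x t := fun x t => hpos _ (hcl2_mem (x, t))
  have hlamC_eq : ∀ x ∈ Set.Icc (0:ℝ) π, ∀ t ∈ Set.Icc (0:ℝ) (2*π), lamC x t = lam x t := by
    intro x hx t ht
    simp only [hlamCdef, hclx_id x hx, hclt_id t ht]
  -- partial derivative of lam in the first variable, clamped
  have hUD : UniqueDiffOn ℝ rect := (uniqueDiffOn_Icc hπ).prod (uniqueDiffOn_Icc h2π)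
  set F' : ℝ × ℝ → (ℝ × ℝ →L[ℝ] ℝ) :=
    fderivWithin ℝ (fun p : ℝ × ℝ => lam p.1 p.2) rect with hF'def
  have hF'cont : ContinuousOn F' rect := hsmooth.continuousOn_fderivWithin hUD (by simp)
  set lam1 : ℝ → ℝ → ℝ := fun x t => F' (clx x, clt t) ((1:ℝ), (0:ℝ)) with hlam1def
  have hlam1_cont : Continuous (Function.uncurry lam1) := by
    have h1 : ContinuousOn (fun q : ℝ × ℝ => F' q ((1:ℝ), (0:ℝ))) rect :=
      hF'cont.clm_apply continuousOn_const
    exact h1.comp_continuous hcl2 hcl2_mem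
  have hlam1_deriv : ∀ x ∈ Set.Ioo (0:ℝ) π, ∀ t : ℝ,
      HasDerivAt (fun s => lamC s t) (lam1 x t) x := by
    intro x hx t
    have ht0 : clt t ∈ Set.Icc (0:ℝ) (2*π) := hclt_mem t
    have hmem : (x, clt t) ∈ rect := ⟨Ioo_subset_Icc_self hx, ht0⟩
    have hdw : HasFDerivWithinAt (fun p : ℝ × ℝ => lam p.1 p.2) (F' (x, clt t)) rect
        (x, clt t) :=
      ((hsmooth.differentiableOn (by simp)) _ hmem).hasFDerivWithinAt
    have hline : HasDerivAt (fun s : ℝ => (s, clt t)) ((1:ℝ), (0:ℝ)) x :=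
      (hasDerivAt_id x).prodMk (hasDerivAt_const x _)
    have hmaps : Set.MapsTo (fun s : ℝ => (s, clt t)) (Set.Icc (0:ℝ) π) rect :=
      fun s hs => ⟨hs, ht0⟩
    have hcomp : HasDerivWithinAt (fun s => lam s (clt t)) (F' (x, clt t) ((1:ℝ), (0:ℝ)))
        (Set.Icc (0:ℝ) π) x :=
      by have := hdw.comp_hasDerivWithinAt x (hline.hasDerivWithinAt) hmaps; exact this
    have hat : HasDerivAt (fun s => lam s (clt t)) (F' (x, clt t) ((1:ℝ), (0:ℝ))) x :=
      hcomp.hasDerivAt (Icc_mem_nhds hx.1 hx.2)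
    have hev : (fun s => lamC s t) =ᶠ[nhds x] (fun s => lam s (clt t)) := by
      filter_upwards [Ioo_mem_nhds hx.1 hx.2] with s hs
      simp only [hlamCdef, hclx_id s (Ioo_subset_Icc_self hs)]
    have : lam1 x t = F' (x, clt t) ((1:ℝ), (0:ℝ)) := by
      simp only [hlam1def, hclx_id x (Ioo_subset_Icc_self hx)]
    rw [this]
    exact hat.congr_of_eventuallyEq hev
  -- the primitive HC and its derivative data
  set HC : ℝ × ℝ → ℝ := fun p => ∫ τ in (0:ℝ)..p.2, lamC p.1 τ with hHCdef
  set cC : ℝ × ℝ → ℝ := fun p => ∫ τ in (0:ℝ)..p.2, lam1 p.1 τ with hcCdef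
  have hHC_cont : Continuous HC :=
    intervalIntegral.continuous_parametric_primitive_of_continuous hlamC_cont
  have hcC_cont : Continuous cC :=
    intervalIntegral.continuous_parametric_primitive_of_continuous hlam1_cont
  have hHC_fderiv : ∀ p : ℝ × ℝ, p.1 ∈ Set.Ioo (0:ℝ) π →
      HasFDerivAt HC (cC p • ContinuousLinearMap.fst ℝ ℝ ℝ +
        lamC p.1 p.2 • ContinuousLinearMap.snd ℝ ℝ ℝ) p := by
    intro p hp
    exact aux_hasFDerivAt_primitive isOpen_Ioo hlamC_cont hlam1_cont
      (fun x hx t => hlam1_deriv x hx t) hp p.2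
  have hHC_cd : ∀ p : ℝ × ℝ, p.1 ∈ Set.Ioo (0:ℝ) π → ContDiffAt ℝ 1 HC p := by
    intro p hp
    have hu : (Set.Ioo (0:ℝ) π ×ˢ (Set.univ : Set ℝ)) ∈ nhds p :=
      (isOpen_Ioo.prod isOpen_univ).mem_nhds ⟨hp, mem_univ _⟩
    exact aux_contDiffAt_one2 hu (fun q hq => hHC_fderiv q hq.1)
      hcC_cont.continuousOn hlamC_cont.continuousOn
  -- Gc
  set Gc : ℝ → ℝ := fun x => HC (x, 2*π) with hGcdef
  have hGc_pos : ∀ x, 0 < Gc x := by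
    intro x
    exact intervalIntegral.intervalIntegral_pos_of_pos
      ((hlamC_cont.comp (continuous_const.prodMk continuous_id)).intervalIntegrable _ _ :
        IntervalIntegrable (fun τ => lamC x τ) volume 0 (2*π))
      (fun t => hlamC_pos x t) h2π
  have hGc_cont : Continuous Gc := hHC_cont.comp (continuous_id.prodMk continuous_const)
  have hHC_eq : ∀ x ∈ Set.Icc (0:ℝ) π, ∀ y ∈ Set.Icc (0:ℝ) (2*π),
      HC (x, y) = ∫ τ in (0:ℝ)..y, lam x τ := by
    intro x hx y hy
    refine intervalIntegral.integral_congr fun t ht => ?_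
    rw [Set.uIcc_of_le hy.1] at ht
    exact hlamC_eq x hx t ⟨ht.1, ht.2.trans hy.2⟩
  have hGc_eq : ∀ x ∈ Set.Icc (0:ℝ) π, Gc x = ∫ τ in (0:ℝ)..(2*π), lam x τ :=
    fun x hx => hHC_eq x hx (2*π) ⟨h2π.le, le_rfl⟩
  -- Φ₂C and its properties
  set Φ₂C : ℝ → ℝ → ℝ := fun x y => 2*π * HC (x, y) / Gc x with hΦ₂Cdef
  set d2 : ℝ → ℝ → ℝ := fun x y => 2*π * lamC x y / Gc x with hd2def
  have hd2_pos : ∀ x y, 0 < d2 x y := fun x y => by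
    have := hlamC_pos x y
    have := hGc_pos x
    positivity
  have hΦ₂C_deriv : ∀ x y, HasDerivAt (fun y' => Φ₂C x y') (d2 x y) y := by
    intro x y
    have hHy : HasDerivAt (fun y' => HC (x, y')) (lamC x y) y :=
      ((hlamC_cont.comp (continuous_const.prodMk continuous_id)).integral_hasStrictDerivAt
        0 y).hasDerivAt
    exact (hHy.const_mul (2*π)).div_const (Gc x)
  have hΦ₂C_mono : ∀ x, StrictMono (Φ₂C x) := by
    intro x
    refine strictMono_of_deriv_pos fun y => ?_
    rw [(hΦ₂C_deriv x y).deriv]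
    exact hd2_pos x y
  have hΦ₂C_cont : ∀ x, Continuous (Φ₂C x) := by
    intro x
    rw [continuous_iff_continuousAt]
    exact fun y => (hΦ₂C_deriv x y).continuousAt
  have hΦ₂C_0 : ∀ x, Φ₂C x 0 = 0 := by
    intro x
    simp only [hΦ₂Cdef, hHCdef, intervalIntegral.integral_same, mul_zero, zero_div]
  have hΦ₂C_2π : ∀ x, Φ₂C x (2*π) = 2*π := by
    intro x
    simp only [hΦ₂Cdef]
    rw [show HC (x, 2*π) = Gc x from rfl, mul_div_assoc, div_self (hGc_pos x).ne', mul_one]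
  have hΦ₂C_maps : ∀ x, ∀ y ∈ Set.Ioo (0:ℝ) (2*π), Φ₂C x y ∈ Set.Ioo (0:ℝ) (2*π) := by
    intro x y hy
    constructor
    · rw [← hΦ₂C_0 x]; exact hΦ₂C_mono x hy.1
    · rw [← hΦ₂C_2π x]; exact hΦ₂C_mono x hy.2
  have hΦ₂C_surj : ∀ x, Set.Ioo (0:ℝ) (2*π) ⊆ (Φ₂C x) '' (Set.Ioo (0:ℝ) (2*π)) := by
    intro x
    have := intermediate_value_Ioo h2π.le (hΦ₂C_cont x).continuousOn
    rwa [hΦ₂C_0 x, hΦ₂C_2π x] at this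
  -- Φ₁ side
  set g1 : ℝ → ℝ := fun σ => Gc σ * Real.sin σ with hg1def
  have hg1_cont : Continuous g1 := hGc_cont.mul continuous_sin
  have hg1_pos : ∀ σ ∈ Set.Ioo (0:ℝ) π, 0 < g1 σ :=
    fun σ hσ => mul_pos (hGc_pos σ) (Real.sin_pos_of_pos_of_lt_pi hσ.1 hσ.2)
  set FC : ℝ → ℝ := fun θ => ∫ σ in (0:ℝ)..θ, g1 σ with hFCdef
  have hFC_deriv : ∀ θ, HasDerivAt FC (g1 θ) θ :=
    fun θ => (hg1_cont.integral_hasStrictDerivAt 0 θ).hasDerivAt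
  have hFC_cont : Continuous FC := by
    rw [continuous_iff_continuousAt]
    exact fun θ => (hFC_deriv θ).continuousAt
  have hFC_mono : StrictMonoOn FC (Set.Icc (0:ℝ) π) := by
    refine strictMonoOn_of_deriv_pos (convex_Icc _ _) hFC_cont.continuousOn fun x hx => ?_
    rw [interior_Icc] at hx
    rw [(hFC_deriv x).deriv]
    exact hg1_pos x hx
  have hFC0 : FC 0 = 0 := intervalIntegral.integral_same
  have hFC_eq : ∀ θ ∈ Set.Icc (0:ℝ) π,
      (∫ σ in (0:ℝ)..θ, ∫ τ in (0:ℝ)..(2*π), lam σ τ * Real.sin σ) = FC θ := by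
    intro θ hθ
    refine intervalIntegral.integral_congr fun σ hσ => ?_
    rw [Set.uIcc_of_le hθ.1] at hσ
    have hσI : σ ∈ Set.Icc (0:ℝ) π := ⟨hσ.1, hσ.2.trans hθ.2⟩
    rw [intervalIntegral.integral_mul_const]
    simp only [hg1def]
    rw [hGc_eq σ hσI]
  have hFCπ : FC π = 4*π := by
    rw [← hFC_eq π ⟨hπ.le, le_rfl⟩]
    exact hnorm
  set uC : ℝ → ℝ := fun θ => 1 - 1/(2*π) * FC θ with huCdef
  have hFC_mem : ∀ θ ∈ Set.Ioo (0:ℝ) π, FC θ ∈ Set.Ioo (0:ℝ) (4*π) := by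
    intro θ hθ
    constructor
    · rw [← hFC0]; exact hFC_mono ⟨le_rfl, hπ.le⟩ ⟨hθ.1.le, hθ.2.le⟩ hθ.1
    · rw [← hFCπ]; exact hFC_mono ⟨hθ.1.le, hθ.2.le⟩ ⟨hπ.le, le_rfl⟩ hθ.2
  have hu_mem : ∀ θ ∈ Set.Ioo (0:ℝ) π, uC θ ∈ Set.Ioo (-1:ℝ) 1 := by
    intro θ hθ
    obtain ⟨h1, h2⟩ := hFC_mem θ hθ
    constructor
    · have : 1/(2*π) * FC θ < 1/(2*π) * (4*π) := by
        apply mul_lt_mul_of_pos_left h2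
        positivity
      have h4 : 1/(2*π) * (4*π) = 2 := by field_simp; ring
      simp only [huCdef]
      nlinarith
    · have : 0 < 1/(2*π) * FC θ := by positivity
      simp only [huCdef]
      linarith
  have hu_memI : ∀ θ ∈ Set.Icc (0:ℝ) π, uC θ ∈ Set.Icc (-1:ℝ) 1 := by
    intro θ hθ
    have h1 : FC 0 ≤ FC θ := hFC_mono.monotoneOn ⟨le_rfl, hπ.le⟩ hθ hθ.1
    have h2 : FC θ ≤ FC π := hFC_mono.monotoneOn hθ ⟨hπ.le, le_rfl⟩ hθ.2
    rw [hFC0] at h1; rw [hFCπ] at h2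
    have hl : 1/(2*π) * FC θ ≤ 1/(2*π) * (4*π) := by
      apply mul_le_mul_of_nonneg_left h2
      positivity
    have h4 : 1/(2*π) * (4*π) = 2 := by field_simp; ring
    have hr : 0 ≤ 1/(2*π) * FC θ := by positivity
    simp only [huCdef]
    constructor <;> nlinarith
  set Φ₁C : ℝ → ℝ := fun θ => Real.arccos (uC θ) with hΦ₁Cdef
  have huC0 : uC 0 = 1 := by simp [huCdef, hFC0]
  have harith : (1:ℝ) - 1/(2*π)*(4*π) = -1 := by
    have h : (4:ℝ)*π/(2*π) = 2 := by rw [div_eq_iff h2π.ne']; ring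
    rw [div_mul_eq_mul_div, one_mul, h]
    norm_num
  have huCπ : uC π = -1 := by
    simp only [huCdef, hFCπ]
    exact harith
  have hΦ₁C0 : Φ₁C 0 = 0 := by rw [hΦ₁Cdef]; simp only [huC0]; exact Real.arccos_one
  have hΦ₁Cπ : Φ₁C π = π := by rw [hΦ₁Cdef]; simp only [huCπ]; exact Real.arccos_neg_one
  have hΦ₁C_mono : StrictMonoOn Φ₁C (Set.Icc (0:ℝ) π) := by
    intro a ha b hb hab
    have hlt : uC b < uC a := by
      have h := hFC_mono ha hb hab
      have hp : (0:ℝ) < 1/(2*π) := by positivity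
      simp only [huCdef]
      nlinarith
    exact Real.strictAntiOn_arccos (hu_memI b hb) (hu_memI a ha) hlt
  have hΦ₁C_cont : Continuous Φ₁C :=
    Real.continuous_arccos.comp (continuous_const.sub (continuous_const.mul hFC_cont))
  have hΦ₁C_maps : ∀ θ ∈ Set.Ioo (0:ℝ) π, Φ₁C θ ∈ Set.Ioo (0:ℝ) π := by
    intro θ hθ
    constructor
    · rw [← hΦ₁C0]; exact hΦ₁C_mono ⟨le_rfl, hπ.le⟩ ⟨hθ.1.le, hθ.2.le⟩ hθ.1
    · rw [← hΦ₁Cπ]; exact hΦ₁C_mono ⟨hθ.1.le, hθ.2.le⟩ ⟨hπ.le, le_rfl⟩ hθ.2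
  have hΦ₁C_surj : Set.Ioo (0:ℝ) π ⊆ Φ₁C '' (Set.Ioo (0:ℝ) π) := by
    have := intermediate_value_Ioo hπ.le hΦ₁C_cont.continuousOn
    rwa [hΦ₁C0, hΦ₁Cπ] at this
  set a1 : ℝ → ℝ := fun θ =>
    -(1/Real.sqrt (1 - uC θ^2)) * -(1/(2*π) * g1 θ) with ha1def
  have hΦ₁C_deriv : ∀ θ ∈ Set.Ioo (0:ℝ) π, HasDerivAt Φ₁C (a1 θ) θ := by
    intro θ hθ
    have hum := hu_mem θ hθ
    have huderiv : HasDerivAt uC (-(1/(2*π) * g1 θ)) θ :=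
      ((hFC_deriv θ).const_mul (1/(2*π))).const_sub 1
    have harc : HasDerivAt Real.arccos (-(1/Real.sqrt (1 - uC θ^2))) (uC θ) :=
      Real.hasDerivAt_arccos (by linarith [hum.1]) (by linarith [hum.2])
    exact harc.comp θ huderiv
  have ha1_pos : ∀ θ ∈ Set.Ioo (0:ℝ) π, 0 < a1 θ := by
    intro θ hθ
    have hum := hu_mem θ hθ
    have husq : uC θ^2 < 1 := by nlinarith [hum.1, hum.2]
    have hs : 0 < Real.sqrt (1 - uC θ^2) := Real.sqrt_pos.2 (by linarith)
    have hg := hg1_pos θ hθ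
    have : a1 θ = (1/Real.sqrt (1 - uC θ^2)) * (1/(2*π) * g1 θ) := by
      simp only [ha1def]; ring
    rw [this]
    have h1 : (0:ℝ) < 1/(2*π) * g1 θ := by positivity
    positivity
  have hΦ₁C_cd : ∀ θ ∈ Set.Ioo (0:ℝ) π, ContDiffAt ℝ 1 Φ₁C θ := by
    intro θ hθ
    have hum := hu_mem θ hθ
    have hFC_cd : ContDiffAt ℝ 1 FC θ :=
      aux_contDiffAt_one Filter.univ_mem (fun y _ => hFC_deriv y) hg1_cont.continuousOn
    have hu_cd : ContDiffAt ℝ 1 uC θ := contDiffAt_const.sub (contDiffAt_const.mul hFC_cd)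
    exact (Real.contDiffAt_arccos (by linarith [hum.1]) (by linarith [hum.2])).comp θ hu_cd
  have hΦ₁_eq : ∀ θ ∈ Set.Icc (0:ℝ) π, Φ₁ θ = Φ₁C θ := by
    intro θ hθ
    rw [hΦ₁ θ]
    simp only [hΦ₁Cdef, huCdef]
    rw [hFC_eq θ hθ]
  -- the comparison map and transfer
  set ΦC : ℝ × ℝ → ℝ × ℝ := fun p => (Φ₁C p.1, Φ₂C p.1 p.2) with hΦCdef
  have hΦeq : Set.EqOn Φ ΦC Ω := by
    intro p hp
    rw [hΦ p, hΦCdef]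
    have hp1 : p.1 ∈ Set.Icc (0:ℝ) π := Ioo_subset_Icc_self hp.1
    have hp2 : p.2 ∈ Set.Icc (0:ℝ) (2*π) := Ioo_subset_Icc_self hp.2
    refine Prod.ext ?_ ?_
    · exact hΦ₁_eq p.1 hp1
    · show Φ₂ p.1 p.2 = Φ₂C p.1 p.2
      rw [hΦ₂ p.1 p.2]
      simp only [hΦ₂Cdef]
      rw [hHC_eq p.1 hp1 p.2 hp2, hGc_eq p.1 hp1]
  have hΦev : ∀ p ∈ Ω, Φ =ᶠ[nhds p] ΦC :=
    fun p hp => Filter.eventuallyEq_of_mem (hΩopen.mem_nhds hp) hΦeq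
  have hΦC_cd : ∀ p ∈ Ω, ContDiffAt ℝ 1 ΦC p := by
    intro p hp
    have h1 : ContDiffAt ℝ 1 (fun q : ℝ × ℝ => Φ₁C q.1) p :=
      (hΦ₁C_cd p.1 hp.1).comp p contDiff_fst.contDiffAt
    have hGfst : ContDiffAt ℝ 1 (fun q : ℝ × ℝ => Gc q.1) p :=
      (hHC_cd (p.1, 2*π) hp.1).comp p (ContDiffAt.prodMk contDiff_fst.contDiffAt contDiffAt_const)
    have h2 : ContDiffAt ℝ 1 (fun q : ℝ × ℝ => Φ₂C q.1 q.2) p := by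
      simp only [hΦ₂Cdef]
      exact (contDiffAt_const.mul (hHC_cd p hp.1)).div hGfst (hGc_pos p.1).ne'
    exact h1.prodMk h2
  have hΦ_cdOn : ContDiffOn ℝ 1 Φ Ω := by
    intro p hp
    exact ((hΦC_cd p hp).congr_of_eventuallyEq (hΦev p hp)).contDiffWithinAt
  -- bijectivity
  have hbijC : Set.BijOn ΦC Ω Ω := by
    refine ⟨?_, ?_, ?_⟩
    · intro p hp
      exact ⟨hΦ₁C_maps p.1 hp.1, hΦ₂C_maps p.1 p.2 hp.2⟩
    · intro p hp q hq h
      have h1 : Φ₁C p.1 = Φ₁C q.1 := congrArg Prod.fst h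
      have hx : p.1 = q.1 := hΦ₁C_mono.injOn (Ioo_subset_Icc_self hp.1)
        (Ioo_subset_Icc_self hq.1) h1
      have h2 : Φ₂C p.1 p.2 = Φ₂C q.1 q.2 := congrArg Prod.snd h
      rw [← hx] at h2
      have hy : p.2 = q.2 := (hΦ₂C_mono p.1).injective h2
      exact Prod.ext hx hy
    · intro z hz
      obtain ⟨x, hxm, hx⟩ := hΦ₁C_surj hz.1
      obtain ⟨y, hym, hy⟩ := hΦ₂C_surj x hz.2
      exact ⟨(x, y), ⟨hxm, hym⟩, Prod.ext hx hy⟩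
  have hbijΦ : Set.BijOn Φ Ω Ω := (Set.EqOn.bijOn_iff hΦeq).2 hbijC
  -- Jacobian determinant
  have hdet : ∀ p ∈ Ω, 0 < LinearMap.det ((fderiv ℝ Φ p).toLinearMap) := by
    intro p hp
    have hdiffC : DifferentiableAt ℝ ΦC p := (hΦC_cd p hp).differentiableAt one_ne_zero
    have hfd : fderiv ℝ Φ p = fderiv ℝ ΦC p := (hΦev p hp).fderiv_eq
    set L : ℝ × ℝ →L[ℝ] ℝ × ℝ := fderiv ℝ ΦC p with hLdef
    have hL : HasFDerivAt ΦC L p := hdiffC.hasFDerivAt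
    -- vertical direction
    have hvline : HasDerivAt (fun y : ℝ => (p.1, y)) ((0:ℝ), (1:ℝ)) p.2 :=
      (hasDerivAt_const _ _).prodMk (hasDerivAt_id _)
    have hv : HasDerivAt (fun y => ΦC (p.1, y)) (L ((0:ℝ), (1:ℝ))) p.2 :=
      hL.comp_hasDerivAt p.2 hvline
    have hv2 : HasDerivAt (fun y => ΦC (p.1, y)) ((0:ℝ), d2 p.1 p.2) p.2 := by
      simp only [hΦCdef]
      exact (hasDerivAt_const _ _).prodMk (hΦ₂C_deriv p.1 p.2)
    have hL01 : L ((0:ℝ), (1:ℝ)) = ((0:ℝ), d2 p.1 p.2) := hv.unique hv2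
    -- horizontal direction
    have hhline : HasDerivAt (fun x : ℝ => (x, p.2)) ((1:ℝ), (0:ℝ)) p.1 :=
      (hasDerivAt_id _).prodMk (hasDerivAt_const _ _)
    have hh : HasDerivAt (fun x => ΦC (x, p.2)) (L ((1:ℝ), (0:ℝ))) p.1 :=
      hL.comp_hasDerivAt p.1 hhline
    have hh1 : HasDerivAt (fun x => (ΦC (x, p.2)).1) ((L ((1:ℝ), (0:ℝ))).1) p.1 := hh.fst
    have hh2 : HasDerivAt (fun x => (ΦC (x, p.2)).1) (a1 p.1) p.1 := by
      simp only [hΦCdef]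
      exact hΦ₁C_deriv p.1 hp.1
    have hL10 : (L ((1:ℝ), (0:ℝ))).1 = a1 p.1 := hh1.unique hh2
    rw [hfd, aux_det_formula]
    rw [show ((1:ℝ),(0:ℝ)) = ((1:ℝ),(0:ℝ)) from rfl] at hL10
    rw [hL10, hL01]
    simp only
    have := ha1_pos p.1 hp.1
    have := hd2_pos p.1 p.2
    nlinarith
  -- the inverse map
  set Ψ : ℝ × ℝ → ℝ × ℝ := Function.invFunOn Φ Ω with hΨdef
  have hinv : Set.InvOn Ψ Φ Ω Ω := hbijΦ.invOn_invFunOn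
  have hΨcd : ContDiffOn ℝ 1 Ψ Ω := by
    intro q hq
    obtain ⟨a, ha, hfa⟩ := hbijΦ.surjOn hq
    have hex : ∃ a ∈ Ω, Φ a = q := ⟨a, ha, hfa⟩
    have hpΩ : Ψ q ∈ Ω := by rw [hΨdef]; exact Function.invFunOn_mem (f := Φ) hex
    have hΦΨ : Φ (Ψ q) = q := by rw [hΨdef]; exact Function.invFunOn_eq (f := Φ) hex
    set p : ℝ × ℝ := Ψ q with hpdef
    have hcdp : ContDiffAt ℝ 1 Φ p :=
      (hΦC_cd p hpΩ).congr_of_eventuallyEq (hΦev p hpΩ)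
    have hdiffp : DifferentiableAt ℝ Φ p := hcdp.differentiableAt one_ne_zero
    have hdetp : (fderiv ℝ Φ p).det ≠ 0 := (hdet p hpΩ).ne'
    set E : (ℝ × ℝ) ≃L[ℝ] (ℝ × ℝ) :=
      (fderiv ℝ Φ p).toContinuousLinearEquivOfDetNeZero hdetp with hEdef
    have hEcoe : (E : (ℝ × ℝ) →L[ℝ] (ℝ × ℝ)) = fderiv ℝ Φ p :=
      ContinuousLinearMap.coe_toContinuousLinearEquivOfDetNeZero _ _
    have hfdE : HasFDerivAt Φ (E : (ℝ × ℝ) →L[ℝ] (ℝ × ℝ)) p := by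
      rw [hEcoe]
      exact hdiffp.hasFDerivAt
    have hstrict : HasStrictFDerivAt Φ (E : (ℝ × ℝ) →L[ℝ] (ℝ × ℝ)) p :=
      hcdp.hasStrictFDerivAt' hfdE one_ne_zero
    set g : ℝ × ℝ → ℝ × ℝ := hstrict.localInverse Φ E p with hgdef
    have hgcd : ContDiffAt ℝ 1 g (Φ p) := hcdp.to_localInverse hfdE one_ne_zero
    have hgval : g (Φ p) = p := hstrict.localInverse_apply_image
    have hrinv : ∀ᶠ y in nhds (Φ p), Φ (g y) = y := hstrict.eventually_right_inverse
    have hgcont : ContinuousAt g (Φ p) := hstrict.localInverse_continuousAt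
    have hgmem : ∀ᶠ y in nhds (Φ p), g y ∈ Ω :=
      hgcont.eventually_mem (hΩopen.mem_nhds (by rw [hgval]; exact hpΩ))
    have hΨg : Ψ =ᶠ[nhds q] g := by
      rw [← hΦΨ]
      filter_upwards [hrinv, hgmem,
        Filter.eventually_mem_set.2 (hΩopen.mem_nhds (hΦΨ ▸ hq))] with y h1 h2 h3
      have hex' : ∃ a ∈ Ω, Φ a = y := hbijΦ.surjOn h3
      have hΨm : Ψ y ∈ Ω := by rw [hΨdef]; exact Function.invFunOn_mem (f := Φ) hex'
      have hΨe : Φ (Ψ y) = y := by rw [hΨdef]; exact Function.invFunOn_eq (f := Φ) hex'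
      exact hbijΦ.injOn hΨm h2 (by rw [hΨe, h1])
    have : ContDiffAt ℝ 1 Ψ q := by
      rw [← hΦΨ]
      exact hgcd.congr_of_eventuallyEq (hΦΨ ▸ hΨg)
    exact this.contDiffWithinAt
  exact ⟨hbijΦ, hΦ_cdOn, hdet, Ψ, hΨcd, hinv⟩
end

section
/- Let Y : Ω → ℝ³ be a smooth map whose first fundamental form is conformal to the round-sphere metric in spherical coordinates: (DY(θ¹,θ²))ᵀ (DY(θ¹,θ²)) = λ(θ¹,θ²) · diag(1, sin²θ¹) for all (θ¹,θ²) ∈ Ω. Define the reparametrized map r := Y ∘ (Φ|_Ω)⁻¹ : Ω → ℝ³. Then for every (φ¹,φ²) ∈ Ω, det( (Dr(φ¹,φ²))ᵀ (Dr(φ¹,φ²)) ) = sin²(φ¹). In other words, the reparametrized surface has the same local area element as the unit sphere in spherical coordinates, so the corresponding deformation of the unit sphere satisfies the local area constraint J ≡ 1. -/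
open Real Set MeasureTheory intervalIntegral Matrix

/-- The total derivative of a map `g : ℝ² → ℝ³`, identified with a 3×2 real matrix. -/
noncomputable def Dmat32 (g : ℝ × ℝ → Fin 3 → ℝ) (p : ℝ × ℝ) : Matrix (Fin 3) (Fin 2) ℝ :=
  Matrix.of fun i j => fderiv ℝ g p (if j = 0 then ((1:ℝ), (0:ℝ)) else ((0:ℝ), (1:ℝ))) i

/-- Let `Y : Ω → ℝ³` be a smooth map whose first fundamental form is
conformal to the round-sphere metric in spherical coordinates:
`(DY)ᵀ(DY) = λ(θ¹,θ²)·diag(1, sin²θ¹)` on `Ω`. Define `r := Y ∘ (Φ|_Ω)⁻¹ : Ω → ℝ³`.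
Then for every `(φ¹,φ²) ∈ Ω`, `det((Dr)ᵀ(Dr)) = sin²(φ¹)`: the reparametrized surface
has the same local area element as the unit sphere, i.e. `J ≡ 1`. -/
theorem stmt_8
    (lam : ℝ → ℝ → ℝ)
    (hsmooth : ContDiffOn ℝ (⊤ : ℕ∞) (fun p : ℝ × ℝ => lam p.1 p.2)
      (Set.Icc (0:ℝ) π ×ˢ Set.Icc (0:ℝ) (2*π)))
    (hpos : ∀ p ∈ Set.Icc (0:ℝ) π ×ˢ Set.Icc (0:ℝ) (2*π), 0 < lam p.1 p.2)
    (hnorm : (∫ σ in (0:ℝ)..π, ∫ τ in (0:ℝ)..(2*π), lam σ τ * Real.sin σ) = 4*π)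
    (Φ₁ : ℝ → ℝ)
    (hΦ₁ : ∀ θ, Φ₁ θ = Real.arccos
      (1 - (1/(2*π)) * ∫ σ in (0:ℝ)..θ, ∫ τ in (0:ℝ)..(2*π), lam σ τ * Real.sin σ))
    (Φ₂ : ℝ → ℝ → ℝ)
    (hΦ₂ : ∀ θ1 θ2, Φ₂ θ1 θ2 =
      2*π * (∫ τ in (0:ℝ)..θ2, lam θ1 τ) / ∫ τ in (0:ℝ)..(2*π), lam θ1 τ)
    (Φ : ℝ × ℝ → ℝ × ℝ)
    (hΦ : ∀ p : ℝ × ℝ, Φ p = (Φ₁ p.1, Φ₂ p.1 p.2))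
    -- Facts from the Lemma: `Φ|_Ω` is a C¹-diffeomorphism of `Ω` onto `Ω` with inverse
    -- `Ψ`, and its Jacobian determinant is `λ(θ¹,θ²) sin θ¹ / sin(Φ₁(θ¹))`.
    (hbij : Set.BijOn Φ (Set.Ioo (0:ℝ) π ×ˢ Set.Ioo (0:ℝ) (2*π))
      (Set.Ioo (0:ℝ) π ×ˢ Set.Ioo (0:ℝ) (2*π)))
    (Ψ : ℝ × ℝ → ℝ × ℝ)
    (hΨ : Set.InvOn Ψ Φ (Set.Ioo (0:ℝ) π ×ˢ Set.Ioo (0:ℝ) (2*π))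
      (Set.Ioo (0:ℝ) π ×ˢ Set.Ioo (0:ℝ) (2*π)))
    (hΨdiff : ContDiffOn ℝ 1 Ψ (Set.Ioo (0:ℝ) π ×ˢ Set.Ioo (0:ℝ) (2*π)))
    (hjac : ∀ p ∈ Set.Ioo (0:ℝ) π ×ˢ Set.Ioo (0:ℝ) (2*π),
      LinearMap.det ((fderiv ℝ Φ p).toLinearMap)
        = lam p.1 p.2 * Real.sin p.1 / Real.sin (Φ₁ p.1))
    -- The map `Y` and its conformal first fundamental form:
    (Y : ℝ × ℝ → Fin 3 → ℝ)
    (hY : ContDiffOn ℝ (⊤ : ℕ∞) Y (Set.Ioo (0:ℝ) π ×ˢ Set.Ioo (0:ℝ) (2*π)))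
    (hmetric : ∀ p ∈ Set.Ioo (0:ℝ) π ×ˢ Set.Ioo (0:ℝ) (2*π),
      (Dmat32 Y p)ᵀ * Dmat32 Y p
        = lam p.1 p.2 • Matrix.diagonal ![1, Real.sin p.1 ^ 2]) :
    ∀ q ∈ Set.Ioo (0:ℝ) π ×ˢ Set.Ioo (0:ℝ) (2*π),
      ((Dmat32 (Y ∘ Ψ) q)ᵀ * Dmat32 (Y ∘ Ψ) q).det = Real.sin q.1 ^ 2 := by
  intro q hq
  have hopen : IsOpen (Set.Ioo (0:ℝ) π ×ˢ Set.Ioo (0:ℝ) (2*π)) :=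
    isOpen_Ioo.prod isOpen_Ioo
  -- Ψ q ∈ Ω
  obtain ⟨p, hp, hpq⟩ := hbij.surjOn hq
  have hΨqp : Ψ q = p := by rw [← hpq]; exact hΨ.1 hp
  have hpΩ : Ψ q ∈ Set.Ioo (0:ℝ) π ×ˢ Set.Ioo (0:ℝ) (2*π) := hΨqp ▸ hp
  -- differentiability facts
  have hΨd : DifferentiableAt ℝ Ψ q :=
    (hΨdiff.differentiableOn one_ne_zero).differentiableAt (hopen.mem_nhds hq)
  have hYd : DifferentiableAt ℝ Y (Ψ q) :=
    (hY.differentiableOn (by simp)).differentiableAt (hopen.mem_nhds hpΩ)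
  -- Φ(Ψ q) = q and Φ₁ (Ψ q).1 = q.1
  have hΦΨ : Φ (Ψ q) = q := hΨ.2 hq
  have hΦ₁q : Φ₁ (Ψ q).1 = q.1 := by
    have h := hΦ (Ψ q)
    rw [hΦΨ] at h
    exact (congrArg Prod.fst h).symm
  -- positivity
  have hlam : 0 < lam (Ψ q).1 (Ψ q).2 :=
    hpos _ ⟨⟨le_of_lt hpΩ.1.1, le_of_lt hpΩ.1.2⟩, ⟨le_of_lt hpΩ.2.1, le_of_lt hpΩ.2.2⟩⟩
  have hsinθ : 0 < Real.sin (Ψ q).1 := Real.sin_pos_of_pos_of_lt_pi hpΩ.1.1 hpΩ.1.2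
  have hsinq : 0 < Real.sin q.1 := Real.sin_pos_of_pos_of_lt_pi hq.1.1 hq.1.2
  -- the jacobian of Φ at Ψ q
  have hdetΦ : LinearMap.det ((fderiv ℝ Φ (Ψ q)).toLinearMap)
      = lam (Ψ q).1 (Ψ q).2 * Real.sin (Ψ q).1 / Real.sin q.1 := by
    rw [hjac _ hpΩ, hΦ₁q]
  have hdetΦpos : 0 < LinearMap.det ((fderiv ℝ Φ (Ψ q)).toLinearMap) := by
    rw [hdetΦ]; positivity
  have hΦd : DifferentiableAt ℝ Φ (Ψ q) := by
    by_contra h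
    rw [fderiv_zero_of_not_differentiableAt h] at hdetΦpos
    simp at hdetΦpos
  -- chain rule : composition is the identity
  have hcomp : (fderiv ℝ Φ (Ψ q)).comp (fderiv ℝ Ψ q) = ContinuousLinearMap.id ℝ (ℝ × ℝ) := by
    have h1 : fderiv ℝ (Φ ∘ Ψ) q = (fderiv ℝ Φ (Ψ q)).comp (fderiv ℝ Ψ q) :=
      fderiv_comp q hΦd hΨd
    have h2 : Φ ∘ Ψ =ᶠ[nhds q] id :=
      Filter.eventuallyEq_of_mem (hopen.mem_nhds hq) (fun y hy => hΨ.2 hy)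
    rw [← h1, h2.fderiv_eq, fderiv_id]
  have hdetmul : LinearMap.det ((fderiv ℝ Φ (Ψ q)).toLinearMap)
      * LinearMap.det ((fderiv ℝ Ψ q).toLinearMap) = 1 := by
    have h := congrArg (fun L : (ℝ × ℝ) →L[ℝ] (ℝ × ℝ) => LinearMap.det (L.toLinearMap)) hcomp
    simpa [ContinuousLinearMap.coe_comp, LinearMap.det_comp] using h
  -- matrix of fderiv Ψ q
  set b := Module.Basis.finTwoProd ℝ with hbdef
  have hb : ∀ j : Fin 2, (if j = 0 then ((1:ℝ),(0:ℝ)) else ((0:ℝ),(1:ℝ))) = b j := by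
    intro j; fin_cases j <;> simp [hbdef]
  set B : Matrix (Fin 2) (Fin 2) ℝ :=
    Matrix.of (fun i j => if i = 0 then (fderiv ℝ Ψ q (b j)).1 else (fderiv ℝ Ψ q (b j)).2)
    with hBdef
  have hBtoLin : Matrix.toLin b b B = (fderiv ℝ Ψ q).toLinearMap := by
    apply b.ext
    intro j
    rw [Matrix.toLin_self]
    have : (fderiv ℝ Ψ q) (b j) =
        ((fderiv ℝ Ψ q (b j)).1, (fderiv ℝ Ψ q (b j)).2) := rfl
    simp [hBdef, Fin.sum_univ_two, hbdef, Prod.ext_iff]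
  have hdetB : B.det = LinearMap.det ((fderiv ℝ Ψ q).toLinearMap) := by
    rw [← hBtoLin, LinearMap.det_toLin]
  -- chain rule for Y ∘ Ψ as matrices
  have hAB : Dmat32 (Y ∘ Ψ) q = Dmat32 Y (Ψ q) * B := by
    have hchain : fderiv ℝ (Y ∘ Ψ) q = (fderiv ℝ Y (Ψ q)).comp (fderiv ℝ Ψ q) :=
      fderiv_comp q hYd hΨd
    ext i j
    have hvsum : fderiv ℝ Ψ q (b j)
        = (fderiv ℝ Ψ q (b j)).1 • ((1:ℝ),(0:ℝ)) + (fderiv ℝ Ψ q (b j)).2 • ((0:ℝ),(1:ℝ)) := by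
      ext <;> simp
    simp only [Dmat32, Matrix.of_apply, Matrix.mul_apply, hchain,
      ContinuousLinearMap.coe_comp', Function.comp_apply, hb j]
    rw [hvsum, map_add, ContinuousLinearMap.map_smul, ContinuousLinearMap.map_smul]
    simp [Fin.sum_univ_two, hBdef]
    try ring
  -- determinant of the metric of Y
  have hdetG : ((Dmat32 Y (Ψ q))ᵀ * Dmat32 Y (Ψ q)).det
      = (lam (Ψ q).1 (Ψ q).2)^2 * (Real.sin (Ψ q).1)^2 := by
    rw [hmetric _ hpΩ, Matrix.det_smul, Matrix.det_diagonal]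
    simp [Fin.prod_univ_two]
    try ring
  -- assemble
  have hkey : lam (Ψ q).1 (Ψ q).2 * Real.sin (Ψ q).1 * B.det = Real.sin q.1 := by
    rw [hdetB]
    have h := hdetmul
    rw [hdetΦ] at h
    field_simp at h
    linarith
  calc ((Dmat32 (Y ∘ Ψ) q)ᵀ * Dmat32 (Y ∘ Ψ) q).det
      = (Bᵀ * ((Dmat32 Y (Ψ q))ᵀ * Dmat32 Y (Ψ q)) * B).det := by
        rw [hAB, Matrix.transpose_mul]
        rw [Matrix.mul_assoc, Matrix.mul_assoc, Matrix.mul_assoc]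
    _ = B.det * (((Dmat32 Y (Ψ q))ᵀ * Dmat32 Y (Ψ q)).det * B.det) := by
        rw [Matrix.det_mul, Matrix.det_mul, Matrix.det_transpose]; ring
    _ = Real.sin q.1 ^ 2 := by
        rw [hdetG, ← hkey]; ring
end
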